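/- arXiv:2102.09263 — 8 statements merged into one kernel-verified Lean document; each statement's English description precedes it below -/
import Mathlib

section
/- Let A → B be a flat ring homomorphism such that the multiplication map B ⊗_A B → B is an isomorphism. Then for every ideal I of B, the ideal generated by f⁻¹(I) in B equals I, i.e. (I ∩ A)·B = I. -/
open TensorProduct

/-- If `A → B` is flat and the multiplication map `B ⊗[A] B → B` is an
isomorphism, then for every ideal `I` of `B` we have `(I ∩ A)·B = I`. -/
theorem extended_contraction_eq_self {A B : Type*} [CommRing A] [CommRing B] [Algebra A B]
    (hflat : Module.Flat A B)
    (hmul : Function.Bijective (LinearMap.mul' A B))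
    (I : Ideal B) :
    Ideal.map (algebraMap A B) (Ideal.comap (algebraMap A B) I) = I := by
  set J : Ideal A := Ideal.comap (algebraMap A B) I with hJ
  refine le_antisymm (Ideal.map_le_iff_le_comap.mpr le_rfl) ?_
  intro x hx
  -- the submodule I as an A-submodule of B
  set I' : Submodule A B := I.restrictScalars A with hI'
  -- the induced injective map A⧸J → B⧸I
  have hle : (J : Submodule A A) ≤ I'.comap (Algebra.linearMap A B) := fun a ha => ha
  set g : (A ⧸ (J : Submodule A A)) →ₗ[A] (B ⧸ I') :=
    Submodule.mapQ (J : Submodule A A) I' (Algebra.linearMap A B) hle with hg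
  have hginj : Function.Injective g := by
    rw [← LinearMap.ker_eq_bot, eq_bot_iff]
    intro y hy
    obtain ⟨a, rfl⟩ := Submodule.Quotient.mk_surjective _ y
    simp only [LinearMap.mem_ker, hg, Submodule.mapQ_apply,
      Submodule.Quotient.mk_eq_zero] at hy
    exact (Submodule.mem_bot _).mpr ((Submodule.Quotient.mk_eq_zero _).mpr hy)
  -- x ⊗ 1 = 1 ⊗ x in B ⊗[A] B
  have hxx : (x ⊗ₜ[A] (1 : B) : B ⊗[A] B) = (1 : B) ⊗ₜ[A] x := by
    apply hmul.injective
    simp [LinearMap.mul'_apply]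
  -- x ⊗ mk 1 = 0 in B ⊗[A] (B ⧸ I')
  have h1 : (x ⊗ₜ[A] (Submodule.Quotient.mk (1 : B) : B ⧸ I') : B ⊗[A] (B ⧸ I')) = 0 := by
    have := congrArg (LinearMap.lTensor B I'.mkQ) hxx
    simp only [LinearMap.lTensor_tmul, Submodule.mkQ_apply] at this
    rw [this]
    have hx0 : (Submodule.Quotient.mk x : B ⧸ I') = 0 :=
      (Submodule.Quotient.mk_eq_zero _).mpr hx
    rw [hx0, tmul_zero]
  -- hence x ⊗ mk 1 = 0 in B ⊗[A] (A ⧸ J)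
  have h2 : (x ⊗ₜ[A] (Submodule.Quotient.mk (1 : A) : A ⧸ (J : Submodule A A))
      : B ⊗[A] (A ⧸ (J : Submodule A A))) = 0 := by
    apply Module.Flat.lTensor_preserves_injective_linearMap g hginj
    rw [map_zero]
    have hcalc : (LinearMap.lTensor B g) (x ⊗ₜ[A] (Submodule.Quotient.mk (1 : A)))
        = x ⊗ₜ[A] g (Submodule.Quotient.mk (1 : A)) := LinearMap.lTensor_tmul B g _ _
    rw [hcalc, hg, Submodule.mapQ_apply]
    simpa using h1
  -- conclude x ∈ J • ⊤ = map(algebraMap) J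
  have h3 := congrArg (TensorProduct.tensorQuotEquivQuotSMul B J) h2
  rw [map_zero] at h3
  have h6 : (TensorProduct.tensorQuotEquivQuotSMul B J)
      (x ⊗ₜ[A] (Submodule.Quotient.mk (1 : A) : A ⧸ (J : Submodule A A)))
      = Submodule.Quotient.mk ((1 : A) • x) :=
    TensorProduct.tensorQuotEquivQuotSMul_tmul_mk (M := B) J x 1
  rw [h3, one_smul] at h6
  have h5 : x ∈ (J • ⊤ : Submodule A B) := (Submodule.Quotient.mk_eq_zero _).mp h6.symm
  rwa [Ideal.smul_top_eq_map J, Submodule.restrictScalars_mem] at h5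
end

section
/- Let A → B be a flat ring homomorphism with B ⊗_A B ≅ B via multiplication. Then the induced map Spec B → Spec A is a topological embedding: it is injective and the Zariski topology on Spec B is the subspace topology induced from Spec A. -/
/-!
For a flat epimorphism `A → B` every ideal `J` of `B` is extended from `A`: with `I = J ∩ A`,
the map `B/IB ≅ B ⊗[A] A/I → B ⊗[A] B/J ≅ B/J` is injective by flatness, and the last
isomorphism holds because `A → B` is an epimorphism. As for localizations, a ring map along
which every ideal is extended induces an embedding of prime spectra.
-/

open Topology

open TensorProduct Algebra.TensorProduct in
theorem Ideal.map_comap_eq_self_of_flat_of_isEpi {A B : Type*} [CommRing A] [CommRing B]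
    [Algebra A B] [Module.Flat A B] [Algebra.IsEpi A B] (J : Ideal B) :
    (J.comap (algebraMap A B)).map (algebraMap A B) = J := by
  set I := J.comap (algebraMap A B)
  let φ : B ⧸ I.map (algebraMap A B) →ₗ[A] B ⧸ J :=
    (lid' A B (B ⧸ J)).toLinearMap.restrictScalars A ∘ₗ
      (quotientMapₐ J (Algebra.ofId A B) le_rfl).toLinearMap.lTensor B ∘ₗ
      (quotIdealMapEquivTensorQuot B I).toLinearMap.restrictScalars A
  have hφ : Function.Injective φ :=
    (lid' A B (B ⧸ J)).injective.comp <|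
      (Module.Flat.lTensor_preserves_injective_linearMap _ quotientMap_injective).comp
        (quotIdealMapEquivTensorQuot B I).injective
  refine le_antisymm map_comap_le fun x hx ↦ ?_
  rw [← Ideal.Quotient.eq_zero_iff_mem] at hx ⊢
  have hφ_mk : φ (Ideal.Quotient.mk _ x) = Ideal.Quotient.mk J x := by
    change lid' A B (B ⧸ J) (x ⊗ₜ quotientMapₐ J (Algebra.ofId A B) le_rfl 1) = _
    rw [map_one, lid'_apply_tmul, Algebra.smul_def, mul_one, Ideal.Quotient.algebraMap_eq]
  apply hφ
  rw [hφ_mk, hx, map_zero]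

theorem PrimeSpectrum.isEmbedding_comap_of_map_comap_eq {R S : Type*} [CommSemiring R]
    [CommSemiring S] (f : R →+* S) (h : ∀ J : Ideal S, (J.comap f).map f = J) :
    IsEmbedding (comap f) := by
  refine ⟨⟨TopologicalSpace.ext_isClosed fun Z ↦ ?_⟩, fun p q hpq ↦ ?_⟩
  · simp_rw [isClosed_induced_iff, isClosed_iff_zeroLocus, @eq_comm _ _ (zeroLocus _),
      exists_exists_eq_and, preimage_comap_zeroLocus]
    constructor
    · rintro ⟨s, rfl⟩
      refine ⟨(Ideal.span s).comap f, ?_⟩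
      rw [← zeroLocus_span, ← zeroLocus_span s, ← Ideal.map, h]
    · rintro ⟨s, rfl⟩
      exact ⟨_, rfl⟩
  · ext1
    simpa only [comap_asIdeal, h] using congrArg (fun x ↦ (asIdeal x).map f) hpq

/-- If `A → B` is flat with `B ⊗[A] B ≅ B` via multiplication, then
`Spec B → Spec A` is a topological embedding (injective, with the subspace topology). -/
theorem primeSpectrum_comap_isEmbedding {A B : Type*} [CommRing A] [CommRing B] [Algebra A B]
    (hflat : Module.Flat A B)
    (hmul : Function.Bijective (LinearMap.mul' A B)) :
    Topology.IsEmbedding (PrimeSpectrum.comap (algebraMap A B)) := by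
  have : Algebra.IsEpi A B := ⟨hmul.injective⟩
  exact PrimeSpectrum.isEmbedding_comap_of_map_comap_eq _ Ideal.map_comap_eq_self_of_flat_of_isEpi
end

section
/- Let A → B be a flat ring homomorphism with B ⊗_A B ≅ B via multiplication, and let q be a prime ideal of A. If q is not in the image of Spec B → Spec A, then q·B = B. If q is in the image, then q·B is a prime ideal of B whose preimage in A is q. -/
open TensorProduct

theorem epi_from_field_surjective {κ L : Type*} [Field κ] [CommRing L] [Algebra κ L]
    [Nontrivial L] (h : ∀ x : L, x ⊗ₜ[κ] (1 : L) = 1 ⊗ₜ[κ] x) :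
    Function.Surjective (algebraMap κ L) := by
  intro x
  by_contra hx
  push_neg at hx
  set W := Submodule.span κ {(1 : L)} with hW
  have hx' : x ∉ W := by
    rw [hW, Submodule.mem_span_singleton]
    rintro ⟨c, hc⟩
    exact hx c (by rw [Algebra.algebraMap_eq_smul_one]; exact hc)
  have hπx : W.mkQ x ≠ 0 := by
    simpa [Submodule.Quotient.mk_eq_zero] using hx'
  obtain ⟨g₀, hg₀⟩ : ∃ g₀ : Module.Dual κ (L ⧸ W), g₀ (W.mkQ x) ≠ 0 := by
    by_contra hc; push_neg at hc
    exact hπx ((Module.forall_dual_apply_eq_zero_iff κ _).mp hc)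
  obtain ⟨f, hf⟩ : ∃ f : Module.Dual κ L, f 1 ≠ 0 := by
    by_contra hc; push_neg at hc
    exact one_ne_zero ((Module.forall_dual_apply_eq_zero_iff κ (1 : L)).mp hc)
  set g : Module.Dual κ L := g₀ ∘ₗ W.mkQ with hg
  have hg1 : g 1 = 0 := by
    have : W.mkQ (1 : L) = 0 := by
      simp [Submodule.Quotient.mk_eq_zero, hW, Submodule.mem_span_singleton_self]
    simp [hg, this]
  have key := congrArg (fun z => TensorProduct.lid κ κ (TensorProduct.map f g z)) (h x)
  simp only [TensorProduct.map_tmul, TensorProduct.lid_tmul, smul_eq_mul, hg1, mul_zero] at key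
  have hgx : g x ≠ 0 := hg₀
  exact (mul_ne_zero hf hgx) key.symm

theorem map_of_prime_aux {A B : Type*} [CommRing A] [CommRing B] [Algebra A B]
    (hflat : Module.Flat A B)
    (hmul : Function.Bijective (LinearMap.mul' A B))
    (q : Ideal A) (hq : q.IsPrime)
    (κ : Type*) [Field κ] [Algebra A κ]
    (hker : RingHom.ker (algebraMap A κ) = q) :
    ((¬ ∃ p : Ideal B, p.IsPrime ∧ Ideal.comap (algebraMap A B) p = q) →
        Ideal.map (algebraMap A B) q = ⊤) ∧
    ((∃ p : Ideal B, p.IsPrime ∧ Ideal.comap (algebraMap A B) p = q) →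
        (Ideal.map (algebraMap A B) q).IsPrime ∧
          Ideal.comap (algebraMap A B) (Ideal.map (algebraMap A B) q) = q) := by
  classical
  set φ : B →ₐ[A] κ ⊗[A] B := Algebra.TensorProduct.includeRight with hφ
  -- Step 1: kernel of φ is q·B
  have key_ker : ∀ b : B, φ b = 0 ↔ b ∈ Ideal.map (algebraMap A B) q := by
    have hexact : Function.Exact (q.subtype) (Algebra.linearMap A κ) := by
      rw [LinearMap.exact_iff]
      ext x
      have : algebraMap A κ x = 0 ↔ x ∈ q := by
        rw [← hker]; exact Iff.rfl
      simp [LinearMap.mem_ker, Algebra.linearMap_apply, Submodule.range_subtype, this]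
    have ht := Module.Flat.rTensor_exact (R := A) B hexact
    intro b
    have h1 : (Algebra.linearMap A κ).rTensor B ((1 : A) ⊗ₜ[A] b) = φ b := by
      simp [hφ]
    have h2 := ht ((1 : A) ⊗ₜ[A] b)
    rw [h1] at h2
    rw [h2]
    have hmem : ∀ x : q ⊗[A] B, (TensorProduct.lid A B) ((q.subtype).rTensor B x) ∈
        q • (⊤ : Submodule A B) := by
      intro x
      induction x using TensorProduct.induction_on with
      | zero => simp
      | tmul a m =>
        simp only [LinearMap.rTensor_tmul, Submodule.coe_subtype, TensorProduct.lid_tmul]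
        exact Submodule.smul_mem_smul a.2 trivial
      | add u v hu hv => rw [map_add, map_add]; exact Submodule.add_mem _ hu hv
    constructor
    · rintro ⟨x, hx⟩
      have := hmem x
      rw [hx] at this
      simp only [TensorProduct.lid_tmul, one_smul] at this
      rw [Ideal.smul_top_eq_map] at this
      exact this
    · intro hb
      have hb' : b ∈ q • (⊤ : Submodule A B) := by
        rw [Ideal.smul_top_eq_map]; exact hb
      clear hb h1 h2
      refine Submodule.smul_induction_on hb' ?_ ?_
      · intro a ha m _
        exact ⟨(⟨a, ha⟩ : q) ⊗ₜ[A] m, by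
          simp only [LinearMap.rTensor_tmul, Submodule.coe_subtype]
          rw [← TensorProduct.smul_tmul, smul_eq_mul, mul_one]⟩
      · rintro u v ⟨x, hx⟩ ⟨y, hy⟩
        exact ⟨x + y, by rw [map_add, hx, hy, TensorProduct.tmul_add]⟩
  constructor
  · -- q not in the image ⇒ q·B = ⊤
    intro hno
    by_contra htop
    have hF1 : (1 : κ ⊗[A] B) ≠ 0 := by
      intro h0
      apply htop
      rw [Ideal.eq_top_iff_one]
      exact (key_ker 1).mp (by rw [map_one, h0])
    haveI : Nontrivial (κ ⊗[A] B) := nontrivial_of_ne 1 0 hF1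
    obtain ⟨m, hm⟩ := Ideal.exists_maximal (κ ⊗[A] B)
    refine hno ⟨Ideal.comap φ.toRingHom m, Ideal.comap_isPrime _ _, ?_⟩
    rw [Ideal.comap_comap]
    have hcomp : φ.toRingHom.comp (algebraMap A B) = algebraMap A (κ ⊗[A] B) :=
      φ.comp_algebraMap
    rw [hcomp, IsScalarTower.algebraMap_eq A κ (κ ⊗[A] B), ← Ideal.comap_comap]
    haveI : (Ideal.comap (algebraMap κ (κ ⊗[A] B)) m).IsPrime := Ideal.comap_isPrime _ _
    have : Ideal.comap (algebraMap κ (κ ⊗[A] B)) m = ⊥ :=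
      (Ideal.comap (algebraMap κ (κ ⊗[A] B)) m).eq_bot_of_prime
    rw [this, ← RingHom.ker_eq_comap_bot, hker]
  · -- q in the image ⇒ q·B prime with preimage q
    rintro ⟨p, hp, hpq⟩
    have hle : Ideal.map (algebraMap A B) q ≤ p := Ideal.map_le_iff_le_comap.mpr hpq.ge
    have hne : Ideal.map (algebraMap A B) q ≠ ⊤ := fun h => hp.ne_top (top_le_iff.mp (h ▸ hle))
    have hF1 : (1 : κ ⊗[A] B) ≠ 0 := by
      intro h0
      exact hne (Ideal.eq_top_iff_one _ |>.mpr ((key_ker 1).mp (by rw [map_one, h0])))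
    haveI : Nontrivial (κ ⊗[A] B) := nontrivial_of_ne 1 0 hF1
    -- the epimorphism condition descends to the fiber
    have hBB : ∀ b : B, (b ⊗ₜ[A] (1 : B) : B ⊗[A] B) = 1 ⊗ₜ[A] b := by
      intro b
      apply hmul.1
      simp [LinearMap.mul'_apply]
    set F := κ ⊗[A] B with hF
    have hepi : ∀ x : F, x ⊗ₜ[κ] (1 : F) = 1 ⊗ₜ[κ] x := by
      have hcomm : ∀ (x y : B),
          Commute (((Algebra.TensorProduct.includeLeft : F →ₐ[κ] F ⊗[κ] F).restrictScalars A).comp φ x)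
            (((Algebra.TensorProduct.includeRight : F →ₐ[κ] F ⊗[κ] F).restrictScalars A).comp φ y) :=
        fun x y => mul_comm _ _
      set Ψ : B ⊗[A] B →ₐ[A] F ⊗[κ] F := Algebra.TensorProduct.lift _ _ hcomm with hΨ
      have hbase : ∀ b : B, (φ b) ⊗ₜ[κ] (1 : F) = 1 ⊗ₜ[κ] (φ b) := by
        intro b
        have := congrArg Ψ (hBB b)
        simpa [hΨ, Algebra.TensorProduct.lift_tmul] using this
      intro x
      induction x using TensorProduct.induction_on with
      | zero => simp
      | tmul c b =>
        have hcb : (c ⊗ₜ[A] b : F) = c • (((1 : κ) ⊗ₜ[A] b : F)) := by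
          rw [TensorProduct.smul_tmul', smul_eq_mul, mul_one]
        have e1 : ((c ⊗ₜ[A] b : F)) ⊗ₜ[κ] (1 : F)
            = c • ((((1 : κ) ⊗ₜ[A] b : F)) ⊗ₜ[κ] (1 : F)) := by
          rw [TensorProduct.smul_tmul', ← hcb]
        have e2 : (1 : F) ⊗ₜ[κ] ((c ⊗ₜ[A] b : F))
            = c • ((1 : F) ⊗ₜ[κ] (((1 : κ) ⊗ₜ[A] b : F))) := by
          rw [← TensorProduct.tmul_smul, ← hcb]
        rw [e1, e2]
        exact congrArg (c • ·) (by simpa [hφ] using hbase b)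
      | add u v hu hv =>
        rw [TensorProduct.add_tmul, TensorProduct.tmul_add, hu, hv]
    have hsurj : Function.Surjective (algebraMap κ F) := epi_from_field_surjective hepi
    have hinj : Function.Injective (algebraMap κ F) := (algebraMap κ F).injective
    let e : κ ≃+* F := RingEquiv.ofBijective (algebraMap κ F) ⟨hinj, hsurj⟩
    haveI : IsDomain F := e.symm.injective.isDomain e.symm.toRingHom
    have hkq : RingHom.ker φ.toRingHom = Ideal.map (algebraMap A B) q := by
      ext b; simpa [RingHom.mem_ker] using key_ker b
    haveI : (RingHom.ker φ.toRingHom).IsPrime := RingHom.ker_isPrime _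
    refine ⟨hkq ▸ this, le_antisymm ?_ Ideal.le_comap_map⟩
    calc Ideal.comap (algebraMap A B) (Ideal.map (algebraMap A B) q)
        ≤ Ideal.comap (algebraMap A B) p := Ideal.comap_mono hle
      _ = q := hpq


/-- Let `A → B` be flat with `B ⊗[A] B ≅ B` via multiplication, and let `q` be a
prime ideal of `A`.  If `q` is not in the image of `Spec B → Spec A` then `q·B = B`; if it is,
then `q·B` is a prime ideal of `B` whose preimage in `A` is `q`. -/
theorem map_of_prime {A B : Type*} [CommRing A] [CommRing B] [Algebra A B]
    (hflat : Module.Flat A B)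
    (hmul : Function.Bijective (LinearMap.mul' A B))
    (q : Ideal A) (hq : q.IsPrime) :
    ((¬ ∃ p : Ideal B, p.IsPrime ∧ Ideal.comap (algebraMap A B) p = q) →
        Ideal.map (algebraMap A B) q = ⊤) ∧
    ((∃ p : Ideal B, p.IsPrime ∧ Ideal.comap (algebraMap A B) p = q) →
        (Ideal.map (algebraMap A B) q).IsPrime ∧
          Ideal.comap (algebraMap A B) (Ideal.map (algebraMap A B) q) = q) := by
  haveI := hq
  refine map_of_prime_aux hflat hmul q hq (FractionRing (A ⧸ q)) ?_
  have hcomp : algebraMap A (FractionRing (A ⧸ q))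
      = (algebraMap (A ⧸ q) (FractionRing (A ⧸ q))).comp (algebraMap A (A ⧸ q)) :=
    IsScalarTower.algebraMap_eq _ _ _
  ext x
  rw [RingHom.mem_ker, hcomp, RingHom.comp_apply]
  constructor
  · intro hx
    have : algebraMap A (A ⧸ q) x = 0 :=
      IsFractionRing.injective (A ⧸ q) (FractionRing (A ⧸ q)) (by simpa using hx)
    exact Ideal.Quotient.eq_zero_iff_mem.mp this
  · intro hx
    rw [show algebraMap A (A ⧸ q) x = 0 from Ideal.Quotient.eq_zero_iff_mem.mpr hx, map_zero]
end

section
/- Let A → B be a flat ring homomorphism with B ⊗_A B ≅ B via multiplication. If I ⊆ A is a radical ideal, then I·B is a radical ideal of B. -/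
/-!
For a flat epimorphism `A → B` every ideal `J` of `B` is extended from `A`: tensoring the injection
`A ⧸ (J ∩ A) → B ⧸ J` with `B` stays injective, and `B ⊗[A] (B ⧸ J) ≅ B ⧸ J`. Hence
`rad (I B) = rad (I B ∩ A) B`. Flatness alone makes extension commute with colons by elements,
`(I B : a) = (I : a) B`, and `(I : a²) = (I : a)` for radical `I`; so `I B ∩ A` is radical and
`rad (I B) = (I B ∩ A) B = I B`.
-/

open TensorProduct

section

variable {A B : Type*} [CommRing A] [CommRing B] [Algebra A B]

theorem Module.Flat.mem_map_annihilator_of_tmul_eq_zero [Module.Flat A B]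
    {M : Type*} [AddCommGroup M] [Module A M] {b : B} {m : M} (h : b ⊗ₜ[A] m = 0) :
    b ∈ (A ∙ m).annihilator.map (algebraMap A B) := by
  set K : Ideal A := LinearMap.ker (LinearMap.toSpanSingleton A M m)
  have hK : K = (A ∙ m).annihilator := by
    ext r
    simp [K]
  have hinj : Function.Injective
      ((K.liftQ (LinearMap.toSpanSingleton A M m) le_rfl).lTensor B) :=
    Module.Flat.lTensor_preserves_injective_linearMap _ <|
      LinearMap.ker_eq_bot.mp (Submodule.ker_liftQ_eq_bot _ _ _ le_rfl)
  have hzero : b ⊗ₜ[A] (Submodule.Quotient.mk 1 : A ⧸ K) = 0 := hinj <| by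
    rw [LinearMap.lTensor_tmul, Submodule.liftQ_apply, LinearMap.toSpanSingleton_apply, one_smul,
      h, map_zero]
  have hmk := congrArg (tensorQuotEquivQuotSMul B K) hzero
  rw [Ideal.Quotient.mk_eq_mk, tensorQuotEquivQuotSMul_tmul_mk, one_smul, map_zero,
    Submodule.Quotient.mk_eq_zero, Ideal.smul_top_eq_map] at hmk
  rwa [← hK]

theorem Ideal.map_colon_singleton_of_flat [Module.Flat A B] (I : Ideal A) (a : A) :
    (I.colon {a}).map (algebraMap A B) = (I.map (algebraMap A B)).colon {algebraMap A B a} := by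
  refine le_antisymm (Ideal.map_le_iff_le_comap.mpr fun r hr => ?_) fun b hb => ?_
  · simp only [Ideal.mem_comap, Submodule.mem_colon_singleton, smul_eq_mul] at hr ⊢
    simpa using Ideal.mem_map_of_mem (algebraMap A B) hr
  · have hann : (A ∙ Ideal.Quotient.mk I a).annihilator = I.colon {a} := by
      ext r
      rw [Submodule.mem_annihilator_span_singleton, ← Ideal.Quotient.mk_eq_mk,
        ← Submodule.Quotient.mk_smul, Submodule.Quotient.mk_eq_zero, Submodule.mem_colon_singleton]
    rw [← hann]
    refine Module.Flat.mem_map_annihilator_of_tmul_eq_zero <|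
      (tensorQuotEquivQuotSMul B I).injective ?_
    rw [tensorQuotEquivQuotSMul_tmul_mk, map_zero, Submodule.Quotient.mk_eq_zero,
      Ideal.smul_top_eq_map, Submodule.restrictScalars_mem, Algebra.smul_def]
    simpa [mul_comm] using hb

theorem Ideal.IsRadical.colon_singleton_pow {I : Ideal A} (hI : I.IsRadical) (a : A) {n : ℕ}
    (hn : n ≠ 0) : I.colon {a ^ n} = I.colon {a} := by
  ext r
  simp only [Submodule.mem_colon_singleton, smul_eq_mul]
  refine ⟨fun h => hI ⟨n, ?_⟩, fun h => ?_⟩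
  · obtain ⟨k, rfl⟩ := Nat.exists_eq_succ_of_ne_zero hn
    rw [mul_pow, pow_succ r, mul_assoc]
    exact I.mul_mem_left _ h
  · obtain ⟨k, rfl⟩ := Nat.exists_eq_succ_of_ne_zero hn
    rw [pow_succ', ← mul_assoc]
    exact I.mul_mem_right _ h

theorem Ideal.IsRadical.comap_map_of_flat [Module.Flat A B] {I : Ideal A} (hI : I.IsRadical) :
    ((I.map (algebraMap A B)).comap (algebraMap A B)).IsRadical := by
  refine (Ideal.isRadical_iff_pow_one_lt 2 one_lt_two).mpr fun a ha => ?_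
  have h1 : (1 : B) ∈ (I.map (algebraMap A B)).colon {algebraMap A B (a ^ 2)} := by
    simpa using ha
  rw [← Ideal.map_colon_singleton_of_flat, hI.colon_singleton_pow a two_ne_zero,
    Ideal.map_colon_singleton_of_flat] at h1
  simpa using h1

theorem Ideal.map_comap_of_isEpi [Module.Flat A B] [Algebra.IsEpi A B] (J : Ideal B) :
    (J.comap (algebraMap A B)).map (algebraMap A B) = J := by
  refine le_antisymm Ideal.map_comap_le fun x hx => ?_
  have hann : (A ∙ Ideal.Quotient.mk J 1).annihilator ≤ J.comap (algebraMap A B) := by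
    intro r hr
    rw [Submodule.mem_annihilator_span_singleton, Algebra.smul_def, map_one, mul_one,
      IsScalarTower.algebraMap_apply A B (B ⧸ J), Ideal.Quotient.algebraMap_eq,
      Ideal.Quotient.eq_zero_iff_mem] at hr
    exact hr
  refine Ideal.map_mono hann (Module.Flat.mem_map_annihilator_of_tmul_eq_zero ?_)
  apply (TensorProduct.lid' A B (B ⧸ J)).injective
  simpa [Algebra.smul_def, Ideal.Quotient.eq_zero_iff_mem] using hx

end

/-- If `A → B` is flat with `B ⊗[A] B ≅ B` via multiplication, and `I ⊆ A` is a
radical ideal, then `I·B` is a radical ideal of `B`. -/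
theorem map_isRadical {A B : Type*} [CommRing A] [CommRing B] [Algebra A B]
    (hflat : Module.Flat A B)
    (hmul : Function.Bijective (LinearMap.mul' A B))
    (I : Ideal A) (hI : I.IsRadical) :
    (Ideal.map (algebraMap A B) I).IsRadical := by
  have : Algebra.IsEpi A B := ⟨hmul.injective⟩
  set J := Ideal.map (algebraMap A B) I
  calc J.radical = (J.radical.comap (algebraMap A B)).map (algebraMap A B) :=
        (Ideal.map_comap_of_isEpi _).symm
    _ = (J.comap (algebraMap A B)).map (algebraMap A B) := by
        rw [Ideal.comap_radical, hI.comap_map_of_flat.radical]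
    _ ≤ J := Ideal.map_comap_le
end

section
/- Let X be a finite topological space and F a sheaf of abelian groups on X. Define C^n F as the sheaf whose sections over an open U are the product over chains x_0 < x_1 < ... < x_n in U of the stalks F_{x_n}, with the standard simplicial differential. Then 0 → F → C^0 F → C^1 F → ... → C^{dim X} F → 0 is an exact sequence of sheaves, and each C^n F is flasque. -/
set_option maxHeartbeats 1000000
set_option synthInstance.maxHeartbeats 400000

/-- A sheaf of abelian groups on a finite topological space, encoded combinatorially: the space
is a finite preordered set (Alexandrov topology, opens = upper sets, `U_x = Set.Ici x` the
minimal open neighbourhood of `x`), and the sheaf is given by its stalks `F x = F(U_x)` together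
with compatible restriction homomorphisms. -/
structure AbSh (X : Type) [Preorder X] : Type 1 where
  F : X → Type
  [ab : ∀ x, AddCommGroup (F x)]
  res : ∀ {x y : X}, x ≤ y → F x →+ F y
  res_refl : ∀ (x : X) (m : F x), res (le_refl x) m = m
  res_trans : ∀ {x y z : X} (h₁ : x ≤ y) (h₂ : y ≤ z) (m : F x),
      res h₂ (res h₁ m) = res (h₁.trans h₂) m

attribute [instance] AbSh.ab

namespace AbSh

variable {X : Type} [Preorder X]

/-- Strictly increasing chains `x₀ < ⋯ < xₙ` inside a subset `U`. -/
def chainIn (n : ℕ) (U : Set X) : Type :=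
  { c : Fin (n + 1) → X // StrictMono c ∧ ∀ i, c i ∈ U }

/-- The group `C^n F(U)` of `n`-cochains of the standard (Godement) complex over `U`: a cochain
assigns to every chain `x₀ < ⋯ < xₙ` in `U` an element of `F_{xₙ}`. -/
abbrev cochain (F : AbSh X) (n : ℕ) (U : Set X) : Type :=
  ∀ c : chainIn n U, F.F (c.1 (Fin.last n))

/-- The `i`-th face of a chain (omit the `i`-th vertex). -/
def chainIn.face {n : ℕ} {U : Set X} (i : Fin (n + 2)) (c : chainIn (n + 1) U) :
    chainIn n U :=
  ⟨c.1 ∘ i.succAbove, (c.2.1.comp (Fin.strictMono_succAbove i)), fun j => c.2.2 _⟩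

/-- The differential `C^n F(U) → C^{n+1} F(U)` of the standard complex (the alternating sum of
the faces, the last term being restricted to `F_{x_{n+1}}`). -/
def d (F : AbSh X) (n : ℕ) (U : Set X) : cochain F n U →+ cochain F (n + 1) U where
  toFun a c := ∑ i : Fin (n + 2),
    ((-1 : ℤ) ^ (i : ℕ)) • F.res (c.2.1.monotone (Fin.le_last _)) (a (chainIn.face i c))
  map_zero' := by
    funext c
    exact Finset.sum_eq_zero fun i _ =>
      (congrArg (HSMul.hSMul ((-1 : ℤ) ^ (i : ℕ))) (map_zero _)).trans (smul_zero _)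
  map_add' a b := by
    funext c
    simp only [Pi.add_apply]
    rw [← Finset.sum_add_distrib]
    exact Finset.sum_congr rfl fun i _ =>
      (congrArg (HSMul.hSMul ((-1 : ℤ) ^ (i : ℕ))) (map_add _ _ _)).trans (smul_add _ _ _)

/-- The cocycles. -/
def cocycles (F : AbSh X) (n : ℕ) (U : Set X) : AddSubgroup (cochain F n U) :=
  (d F n U).ker

/-- The coboundaries, viewed inside the cocycles. -/
def bdries (F : AbSh X) (U : Set X) : (n : ℕ) → AddSubgroup ↥(cocycles F n U)
  | 0 => ⊥
  | (k + 1) => ((d F k U).range).addSubgroupOf (cocycles F (k + 1) U)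

/-- The sheaf cohomology `Hⁿ(U, F)` computed via the standard complex (which, on a finite
topological space, is a finite flasque resolution of `F`). -/
def H (F : AbSh X) (n : ℕ) (U : Set X) : Type :=
  ↥(cocycles F n U) ⧸ bdries F U n

instance (F : AbSh X) (n : ℕ) (U : Set X) : AddCommGroup (H F n U) :=
  inferInstanceAs (AddCommGroup (↥(cocycles F n U) ⧸ bdries F U n))

end AbSh

namespace AbSh

variable {X : Type} [Preorder X]

/-- The augmentation `F_x = F(U_x) → C⁰F(U_x)`. -/
def aug (F : AbSh X) (x : X) : F.F x →+ cochain F 0 (Set.Ici x) where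
  toFun m c := F.res (c.2.2 (Fin.last 0)) m
  map_zero' := by funext c; simp
  map_add' a b := by funext c; simp

/-- The restriction map `C^nF(U) → C^nF(V)` for `V ⊆ U`. -/
def cochainRes (F : AbSh X) (n : ℕ) {U V : Set X} (hVU : V ⊆ U) :
    cochain F n U →+ cochain F n V where
  toFun a c := a ⟨c.1, c.2.1, fun i => hVU (c.2.2 i)⟩
  map_zero' := rfl
  map_add' _ _ := rfl

/-- The (combinatorial) dimension of `X`: the length of the longest strictly increasing chain. -/
noncomputable def dim (X : Type) [Preorder X] : ℕ :=
  sSup { n | ∃ c : Fin (n + 1) → X, StrictMono c }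

end AbSh

/-!
Since `x` is the minimum of `U_x = Ici x`, prepending `x` to the chains of `U_x` that do not
start at `x` is a contracting homotopy of the augmented complex `F_x → C^•F(U_x)`:
`d h + h d = id`, and `aug (a x) + h (d a) = a` in degree `0`. This gives exactness at every stalk.
`d ∘ d = 0` because the pair of faces `(i, j)` and `(i.succAbove j, j.predAbove i)` produce the same
chain with opposite signs. Flasqueness is extension by zero, and a chain longer than `dim X` does
not exist.
-/

namespace AbSh

section Chains

variable {X : Type} [Preorder X]

lemma chainIn.le_last {n : ℕ} {U : Set X} (c : chainIn n U) (i : Fin (n + 1)) :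
    c.1 i ≤ c.1 (Fin.last n) :=
  c.2.1.monotone (Fin.le_last i)

lemma chainIn.face_face {n : ℕ} {U : Set X} (c : chainIn (n + 2) U) (i : Fin (n + 3))
    (j : Fin (n + 2)) : (c.face i).face j = (c.face (i.succAbove j)).face (j.predAbove i) :=
  Subtype.ext <| funext fun k =>
    congrArg c.1 (Fin.succAbove_succAbove_succAbove_predAbove i j k).symm

lemma neg_one_pow_succAbove_add_predAbove {n : ℕ} (i : Fin (n + 2)) (j : Fin (n + 1)) :
    (-1 : ℤ) ^ ((i.succAbove j : ℕ) + (j.predAbove i : ℕ)) = -(-1) ^ ((i : ℕ) + j) := by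
  have key : (i.succAbove j : ℕ) + (j.predAbove i : ℕ) + 1 = i + j ∨
      (i.succAbove j : ℕ) + (j.predAbove i : ℕ) = i + j + 1 := by
    simp only [Fin.succAbove, Fin.predAbove, Fin.lt_def, Fin.val_castSucc, apply_dite Fin.val,
      Fin.val_pred, Fin.coe_castPred, apply_ite Fin.val, Fin.val_succ]
    split_ifs <;> omega
  rcases key with h | h
  · rw [← h, pow_succ, mul_neg_one, neg_neg]
  · rw [h, pow_succ, mul_neg_one]

def chainIn.cons {x : X} {n : ℕ} (c : chainIn n (Set.Ici x)) (hx : x < c.1 0) :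
    chainIn (n + 1) (Set.Ici x) :=
  ⟨Fin.cons x c.1,
    Fin.strictMono_cons.2 ⟨fun j => hx.trans_le (c.2.1.monotone (Fin.zero_le j)), c.2.1⟩,
    Fin.cases le_rfl c.2.2⟩

def chainIn.singleton (x : X) : chainIn 0 (Set.Ici x) :=
  ⟨fun _ => x, Subsingleton.strictMono (α := Fin 1) _, fun _ => le_rfl⟩

lemma chainIn.cons_face_zero {x : X} {n : ℕ} (c : chainIn n (Set.Ici x)) (hx : x < c.1 0) :
    (c.cons hx).face 0 = c :=
  Subtype.ext <| funext fun k => by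
    simp only [chainIn.face, chainIn.cons, Function.comp_apply, Fin.zero_succAbove, Fin.cons_succ]

lemma chainIn.lt_face_zero {x : X} {n : ℕ} (c : chainIn (n + 1) (Set.Ici x)) (hx : x < c.1 0)
    (i : Fin (n + 2)) : x < (c.face i).1 0 :=
  hx.trans_le (c.2.1.monotone (Fin.zero_le _))

lemma chainIn.cons_face_succ {x : X} {n : ℕ} (c : chainIn (n + 1) (Set.Ici x)) (hx : x < c.1 0)
    (i : Fin (n + 2)) : (c.cons hx).face i.succ = (c.face i).cons (c.lt_face_zero hx i) :=
  Subtype.ext <| funext fun k => by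
    cases k using Fin.cases <;>
      simp only [chainIn.face, chainIn.cons, Function.comp_apply, Fin.succ_succAbove_zero,
        Fin.succ_succAbove_succ, Fin.cons_zero, Fin.cons_succ]

lemma chainIn.cons_face_zero_of_eq {x : X} {n : ℕ} (c : chainIn (n + 1) (Set.Ici x))
    (hx : c.1 0 = x) (h : x < (c.face 0).1 0) : (c.face 0).cons h = c :=
  Subtype.ext <| funext fun k => by
    cases k using Fin.cases <;> simp [chainIn.face, chainIn.cons, hx]

lemma chainIn.eq_singleton {x : X} (c : chainIn 0 (Set.Ici x)) (hx : c.1 0 = x) :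
    c = chainIn.singleton x :=
  Subtype.ext <| funext fun k => by rw [Subsingleton.elim (α := Fin 1) k 0, hx]; rfl

lemma chainIn.cons_face_one {x : X} (c : chainIn 0 (Set.Ici x)) (hx : x < c.1 0) :
    (c.cons hx).face 1 = chainIn.singleton x :=
  Subtype.ext <| funext fun k => by
    rw [Subsingleton.elim (α := Fin 1) k 0]; rfl

end Chains

section Complex

variable {X : Type} [Preorder X] (F : AbSh X)

lemma d_apply {n : ℕ} {U : Set X} (a : cochain F n U) (c : chainIn (n + 1) U) :
    d F n U a c = ∑ i : Fin (n + 2), ((-1 : ℤ) ^ (i : ℕ)) • F.res (c.le_last _) (a (c.face i)) :=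
  rfl

lemma res_apply_congr {n : ℕ} {U : Set X} (a : cochain F n U) {c₁ c₂ : chainIn n U}
    (e : c₁ = c₂) {y : X} (h₁ : c₁.1 (Fin.last n) ≤ y) (h₂ : c₂.1 (Fin.last n) ≤ y) :
    F.res h₁ (a c₁) = F.res h₂ (a c₂) := by
  subst e; rfl

lemma res_apply_of_eq {n : ℕ} {U : Set X} (a : cochain F n U) {c₁ c₂ : chainIn n U}
    (e : c₁ = c₂) (h : c₁.1 (Fin.last n) ≤ c₂.1 (Fin.last n)) :
    F.res h (a c₁) = a c₂ := by
  subst e; exact F.res_refl _ _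

lemma d_d_apply {n : ℕ} {U : Set X} (a : cochain F n U) (c : chainIn (n + 1 + 1) U) :
    d F (n + 1) U (d F n U a) c = ∑ p : Fin (n + 3) × Fin (n + 2),
      ((-1 : ℤ) ^ ((p.1 : ℕ) + p.2)) • F.res (c.le_last _) (a ((c.face p.1).face p.2)) := by
  rw [Fintype.sum_prod_type, d_apply]
  refine Finset.sum_congr rfl fun i _ => ?_
  rw [d_apply]
  refine (congrArg _ (map_sum _ _ _)).trans ?_
  rw [Finset.smul_sum]
  refine Finset.sum_congr rfl fun j _ => ?_
  refine (congrArg _ (map_zsmul _ _ _)).trans ?_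
  rw [smul_smul, ← pow_add]
  exact congrArg _ (F.res_trans _ _ _)

theorem d_d {n : ℕ} {U : Set X} (a : cochain F n U) : d F (n + 1) U (d F n U a) = 0 := by
  funext c
  rw [d_d_apply]
  refine Finset.sum_ninvolution (fun p => (p.1.succAbove p.2, p.2.predAbove p.1)) ?_
    (fun p _ h => Fin.succAbove_ne _ _ (congrArg Prod.fst h)) (fun _ => Finset.mem_univ _)
    (fun p => Prod.ext (Fin.succAbove_succAbove_predAbove _ _)
      (Fin.predAbove_predAbove_succAbove _ _))
  rintro ⟨i, j⟩
  dsimp only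
  rw [neg_one_pow_succAbove_add_predAbove, neg_smul, add_neg_eq_zero]
  exact congrArg _ (res_apply_congr F a (c.face_face i j) _ _)

lemma aug_injective (x : X) : Function.Injective (aug F x) :=
  Function.LeftInverse.injective (g := fun a => a (chainIn.singleton x)) fun m => F.res_refl x m

lemma d_aug (x : X) (m : F.F x) : d F 0 (Set.Ici x) (aug F x m) = 0 := by
  funext c
  have h : ∀ i : Fin 2, F.res (c.le_last _) (aug F x m (c.face i)) = F.res (c.2.2 (Fin.last 1)) m :=
    fun i => F.res_trans _ _ _
  rw [d_apply, Fin.sum_univ_two, Fin.val_zero, Fin.val_one, pow_zero, pow_one, one_smul,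
    neg_one_smul, h 0, h 1]
  exact add_neg_cancel _

theorem cochainRes_surjective (n : ℕ) {U V : Set X} (hVU : V ⊆ U) :
    Function.Surjective (cochainRes F n hVU) := by
  classical
  exact fun a => ⟨fun c => if h : ∀ i, c.1 i ∈ V then a ⟨c.1, c.2.1, h⟩ else 0,
    funext fun c => dif_pos c.2.2⟩

lemma le_dim_of_strictMono [Finite X] {n : ℕ} {c : Fin (n + 1) → X} (hc : StrictMono c) :
    n ≤ dim X :=
  le_csSup ⟨Nat.card X, fun m ⟨f, hf⟩ => by
    have := Nat.card_le_card_of_injective f hf.injective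
    rw [Nat.card_fin] at this
    omega⟩ ⟨c, hc⟩

lemma isEmpty_chainIn_of_dim_lt [Finite X] {n : ℕ} (U : Set X) (hn : dim X < n) :
    IsEmpty (chainIn n U) :=
  ⟨fun c => (le_dim_of_strictMono c.2.1).not_gt hn⟩

end Complex

section Contraction

variable {X : Type} [Preorder X] (F : AbSh X)

open Classical in
noncomputable def contraction (x : X) (n : ℕ) (a : cochain F (n + 1) (Set.Ici x)) :
    cochain F n (Set.Ici x) :=
  fun c => if hx : x < c.1 0 then a (c.cons hx) else 0

lemma contraction_apply_of_lt {x : X} {n : ℕ} (a : cochain F (n + 1) (Set.Ici x))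
    {c : chainIn n (Set.Ici x)} (hx : x < c.1 0) : contraction F x n a c = a (c.cons hx) :=
  dif_pos hx

lemma contraction_apply_of_not_lt {x : X} {n : ℕ} (a : cochain F (n + 1) (Set.Ici x))
    {c : chainIn n (Set.Ici x)} (hx : ¬x < c.1 0) : contraction F x n a c = 0 :=
  dif_neg hx

lemma contraction_zero (x : X) (n : ℕ) : contraction F x n 0 = 0 :=
  funext fun c => by
    by_cases hx : x < c.1 0
    exacts [contraction_apply_of_lt F 0 hx, contraction_apply_of_not_lt F 0 hx]

lemma d_contraction_add_contraction_d_apply_of_lt {x : X} {n : ℕ}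
    (a : cochain F (n + 1) (Set.Ici x)) {c : chainIn (n + 1) (Set.Ici x)} (hx : x < c.1 0) :
    d F n _ (contraction F x n a) c + contraction F x (n + 1) (d F (n + 1) _ a) c = a c := by
  have h0 : F.res ((c.cons hx).le_last _) (a ((c.cons hx).face 0)) = a c :=
    res_apply_of_eq F a (c.cons_face_zero hx) _
  have hsucc : ∀ i, F.res ((c.cons hx).le_last _) (a ((c.cons hx).face i.succ)) =
      F.res (c.le_last _) (contraction F x n a (c.face i)) := fun i => by
    rw [contraction_apply_of_lt F a (c.lt_face_zero hx i)]
    exact res_apply_congr F a (c.cons_face_succ hx i) _ _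
  have hcd : contraction F x (n + 1) (d F (n + 1) _ a) c =
      a c - d F n _ (contraction F x n a) c := by
    rw [contraction_apply_of_lt F _ hx, d_apply, Fin.sum_univ_succ, d_apply, sub_eq_add_neg,
      ← Finset.sum_neg_distrib]
    refine congrArg₂ (· + ·) ?_ (Finset.sum_congr rfl fun i _ => ?_)
    · rw [Fin.val_zero, pow_zero, one_smul]
      exact h0
    · rw [Fin.val_succ, pow_succ, mul_neg_one, neg_smul]
      exact congrArg (fun m => -((-1 : ℤ) ^ (i : ℕ) • m)) (hsucc i)
  rw [hcd, add_sub_cancel]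

end Contraction

section Exactness

variable {X : Type} [PartialOrder X] (F : AbSh X)

lemma d_contraction_apply_of_not_lt {x : X} {n : ℕ} (a : cochain F (n + 1) (Set.Ici x))
    {c : chainIn (n + 1) (Set.Ici x)} (hx : ¬x < c.1 0) :
    d F n _ (contraction F x n a) c = a c := by
  have hx0 : c.1 0 = x := ((c.2.2 0).eq_of_not_lt hx).symm
  have h1 : x < (c.face 0).1 0 := hx0.symm.trans_lt (c.2.1 (Fin.succ_pos 0))
  -- the faces `∂ᵢ₊₁ c` keep the first vertex `x`
  have htail : ∀ i : Fin (n + 1), contraction F x n a (c.face i.succ) = 0 := fun i =>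
    contraction_apply_of_not_lt F a (c := c.face i.succ) hx
  rw [d_apply, Fin.sum_univ_succ, Fin.val_zero, pow_zero, one_smul]
  rw [Finset.sum_eq_zero fun i _ => by
    rw [htail i]; exact (congrArg _ (map_zero _)).trans (smul_zero _), add_zero]
  exact (congrArg _ (contraction_apply_of_lt F a h1)).trans
    (res_apply_of_eq F a (c.cons_face_zero_of_eq hx0 h1) _)

theorem d_contraction_add_contraction_d {x : X} {n : ℕ} (a : cochain F (n + 1) (Set.Ici x)) :
    d F n _ (contraction F x n a) + contraction F x (n + 1) (d F (n + 1) _ a) = a := by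
  funext c
  by_cases hx : x < c.1 0
  · exact d_contraction_add_contraction_d_apply_of_lt F a hx
  · rw [Pi.add_apply, contraction_apply_of_not_lt F _ hx, add_zero]
    exact d_contraction_apply_of_not_lt F a hx

theorem aug_add_contraction_d (x : X) (a : cochain F 0 (Set.Ici x)) :
    aug F x (a (chainIn.singleton x)) + contraction F x 0 (d F 0 _ a) = a := by
  funext c
  by_cases hx : x < c.1 0
  · have hcd : contraction F x 0 (d F 0 _ a) c = a c - aug F x (a (chainIn.singleton x)) c := by
      rw [contraction_apply_of_lt F _ hx, d_apply, Fin.sum_univ_two, sub_eq_add_neg]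
      refine congrArg₂ (· + ·) ?_ ?_
      · rw [Fin.val_zero, pow_zero, one_smul]
        exact res_apply_of_eq F a (c.cons_face_zero hx) _
      · rw [Fin.val_one, pow_one, neg_one_smul]
        exact congrArg Neg.neg (res_apply_congr F a (c.cons_face_one hx) ((c.cons hx).le_last _)
          (c.2.2 (Fin.last 0)))
    rw [Pi.add_apply, hcd, add_sub_cancel]
  · have hc := c.eq_singleton ((c.2.2 0).eq_of_not_lt hx).symm
    rw [Pi.add_apply, contraction_apply_of_not_lt F _ hx, add_zero]
    exact res_apply_of_eq F a hc.symm _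

theorem range_aug_eq_ker_d (x : X) : (aug F x).range = (d F 0 (Set.Ici x)).ker := by
  refine le_antisymm ?_ fun a ha => ⟨a (chainIn.singleton x), ?_⟩
  · rintro _ ⟨m, rfl⟩
    exact d_aug F x m
  · have h := aug_add_contraction_d F x a
    rwa [AddMonoidHom.mem_ker.1 ha, contraction_zero, add_zero] at h

theorem range_d_eq_ker_d (x : X) (n : ℕ) :
    (d F n (Set.Ici x)).range = (d F (n + 1) (Set.Ici x)).ker := by
  refine le_antisymm ?_ fun a ha => ⟨contraction F x n a, ?_⟩
  · rintro _ ⟨b, rfl⟩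
    exact d_d F b
  · have h := d_contraction_add_contraction_d F a
    rwa [AddMonoidHom.mem_ker.1 ha, contraction_zero, add_zero] at h

end Exactness

end AbSh

/-- For a sheaf of abelian groups `F` on a finite (T₀) topological space `X`,
the standard complex `0 → F → C⁰F → C¹F → ⋯ → C^{dim X}F → 0` is a finite flasque resolution of
`F`: (1) exactness at each stalk (the augmentation `F_x → C⁰F(U_x)` is injective, its image is
the kernel of `d⁰`, and `im dⁿ = ker d^{n+1}` throughout); (2) each `C^nF` is flasque (all
restriction maps are surjective); and (3) `C^nF = 0` for `n > dim X`. -/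
theorem AbSh.standard_resolution {X : Type} [Finite X] [PartialOrder X] (F : AbSh X) :
    (∀ x : X, Function.Injective (AbSh.aug F x)) ∧
    (∀ x : X, (AbSh.aug F x).range = (AbSh.d F 0 (Set.Ici x)).ker) ∧
    (∀ (x : X) (n : ℕ),
        (AbSh.d F n (Set.Ici x)).range = (AbSh.d F (n + 1) (Set.Ici x)).ker) ∧
    (∀ (n : ℕ) (U V : Set X), IsUpperSet U → IsUpperSet V → ∀ hVU : V ⊆ U,
        Function.Surjective (AbSh.cochainRes F n hVU)) ∧
    (∀ (n : ℕ) (U : Set X), AbSh.dim X < n → Subsingleton (AbSh.cochain F n U)) := by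
  refine ⟨AbSh.aug_injective F, AbSh.range_aug_eq_ker_d F, AbSh.range_d_eq_ker_d F,
    fun n _ _ _ _ hVU => AbSh.cochainRes_surjective F n hVU, fun n U hn => ?_⟩
  have := AbSh.isEmpty_chainIn_of_dim_lt U hn
  infer_instance
end

section
/- Let (X, O) be a finite ringed space (a finite topological space with a sheaf of commutative rings). An O-module M is quasi-coherent if and only if for all points x ≤ y of X, the natural map M_x ⊗_{O_x} O_y → M_y (induced by the restriction map) is an isomorphism. -/
open scoped TensorProduct

/-- A finite ringed space, encoded combinatorially: a finite preordered set `X` (the topology is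
the Alexandrov topology whose open sets are the upper sets, and `U_x = Set.Ici x` is the minimal
open neighbourhood of `x`), a commutative ring `O x` at each point (the stalk,
`O x = O(U_x)`), and compatible restriction ring homomorphisms. -/
structure FRS : Type 1 where
  X : Type
  [fin : Finite X]
  [ord : Preorder X]
  O : X → Type
  [ring : ∀ x, CommRing (O x)]
  res : ∀ {x y : X}, x ≤ y → O x →+* O y
  res_refl : ∀ x : X, res (le_refl x) = RingHom.id (O x)
  res_trans : ∀ {x y z : X} (h₁ : x ≤ y) (h₂ : y ≤ z),
      (res h₂).comp (res h₁) = res (h₁.trans h₂)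

attribute [instance] FRS.fin FRS.ord FRS.ring

namespace FRS

variable (S : FRS)

/-- The sections of the structure sheaf over a subset `U` (intended: an open, i.e. upper, set):
compatible families of stalk elements. -/
def sect (U : Set S.X) : Subring (∀ z : U, S.O z.1) where
  carrier := { s | ∀ ⦃z w : U⦄ (h : z.1 ≤ w.1), S.res h (s z) = s w }
  zero_mem' := by intro z w h; simp
  one_mem' := by intro z w h; simp
  add_mem' := by
    intro a b ha hb z w h
    simp only [Pi.add_apply, map_add, ha h, hb h]
  mul_mem' := by
    intro a b ha hb z w h
    simp only [Pi.mul_apply, map_mul, ha h, hb h]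
  neg_mem' := by
    intro a ha z w h
    simp only [Pi.neg_apply, map_neg, ha h]

/-- The ring of sections over `U`. -/
abbrev Gamma (U : Set S.X) : Type := ↥(S.sect U)

/-- Evaluation of a section at a point of `U` (restriction to the stalk). -/
def ev {U : Set S.X} (x : S.X) (hx : x ∈ U) : S.Gamma U →+* S.O x :=
  (Pi.evalRingHom _ (⟨x, hx⟩ : U)).comp (S.sect U).subtype

/-- Restriction of global sections to the stalk at `x`. -/
def toStalk (x : S.X) : S.Gamma Set.univ →+* S.O x :=
  S.ev x (Set.mem_univ x)

/-- The canonical morphism `O(X) → ∏ₓ O_x`. -/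
def toProd : S.Gamma Set.univ →+* ∀ x : S.X, S.O x :=
  Pi.ringHom fun x => S.toStalk x

/-- Restriction of sections along an inclusion of subsets. -/
def resSect {U V : Set S.X} (h : V ⊆ U) : S.Gamma U →+* S.Gamma V where
  toFun s := ⟨fun z => (s : ∀ z : U, S.O z.1) ⟨z.1, h z.2⟩,
    fun z w hzw => s.2 (z := ⟨z.1, h z.2⟩) (w := ⟨w.1, h w.2⟩) hzw⟩
  map_one' := rfl
  map_mul' _ _ := rfl
  map_zero' := rfl
  map_add' _ _ := rfl

/-- The canonical map from the stalk at `x` to the sections over a subset of `U_x = Ici x`. -/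
def stalkSect {x : S.X} {U : Set S.X} (hU : U ⊆ Set.Ici x) : S.O x →+* S.Gamma U where
  toFun a := ⟨fun z => S.res (hU z.2) a, by
    intro z w h
    have := RingHom.congr_fun (S.res_trans (hU z.2) h) a
    simpa using this⟩
  map_one' := by ext z; simp
  map_mul' a b := by ext z; simp
  map_zero' := by ext z; simp
  map_add' a b := by ext z; simp

/-- The canonical morphism `O(U) → ∏_{z ∈ U} O_z`. -/
def sectToProd (U : Set S.X) : S.Gamma U →+* ∀ z : U, S.O z.1 :=
  (S.sect U).subtype

/-- Each stalk is an algebra over the ring of global sections. -/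
noncomputable instance globAlgebra (x : S.X) : Algebra (S.Gamma Set.univ) (S.O x) :=
  (S.toStalk x).toAlgebra

/-- The sections over any subset form an algebra over the ring of global sections. -/
noncomputable instance gammaAlgebra (U : Set S.X) :
    Algebra (S.Gamma Set.univ) (S.Gamma U) :=
  (S.resSect (Set.subset_univ U)).toAlgebra

end FRS

/-- A ring homomorphism is faithfully flat if it makes the target into a faithfully flat module
over the source. -/
def RingHom.IsFaithfullyFlatHom {A B : Type*} [CommRing A] [CommRing B] (f : A →+* B) : Prop :=
  @Module.FaithfullyFlat A B _ _ (Module.compHom B f)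

/-- A ring homomorphism is flat if it makes the target into a flat module over the source. -/
def RingHom.IsFlatHom {A B : Type*} [CommRing A] [CommRing B] (f : A →+* B) : Prop :=
  @Module.Flat A B _ _ (Module.compHom B f)

namespace FRS

variable (S : FRS)

/-- `X` is an affine finite space: (1) `O(X) → ∏ₓ O_x` is faithfully flat; (2) the natural map
`O_x ⊗_{O(X)} O_y → O(U_x ∩ U_y)` (characterized on simple tensors) is an isomorphism;
(3) `O(U_x ∩ U_y) → ∏_{z ∈ U_x ∩ U_y} O_z` is faithfully flat. -/
def IsAffine : Prop :=
  S.toProd.IsFaithfullyFlatHom ∧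
  (∀ x y : S.X,
    ∀ ψ : ((S.O x) ⊗[S.Gamma Set.univ] (S.O y)) →+* S.Gamma (Set.Ici x ∩ Set.Ici y),
      (∀ (a : S.O x) (b : S.O y) (z : ↥(Set.Ici x ∩ Set.Ici y)),
        ((ψ (a ⊗ₜ b)) : ∀ w : ↥(Set.Ici x ∩ Set.Ici y), S.O w.1) z
          = S.res z.2.1 a * S.res z.2.2 b) →
      Function.Bijective ψ) ∧
  (∀ x y : S.X, (S.sectToProd (Set.Ici x ∩ Set.Ici y)).IsFaithfullyFlatHom)

/-- The open (= upper) subset `U`, as a finite ringed space in its own right. -/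
noncomputable def restrict (U : Set S.X) : FRS where
  X := ↥U
  fin := inferInstance
  ord := inferInstance
  O := fun u => S.O u.1
  ring := fun _ => inferInstance
  res := fun h => S.res h
  res_refl := fun u => S.res_refl u.1
  res_trans := fun h₁ h₂ => S.res_trans h₁ h₂

/-- An affine open subset. -/
def IsAffineOpen (U : Set S.X) : Prop :=
  IsUpperSet U ∧ (S.restrict U).IsAffine

/-- A schematic finite space: every minimal open set `U_x` is affine. -/
def IsSchematic : Prop :=
  ∀ x : S.X, (S.restrict (Set.Ici x)).IsAffine

end FRS
namespace FRS

/-- A sheaf of `O`-modules on a finite ringed space, given stalkwise: an `O_x`-module `M x` for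
each point, with additive restriction maps that are semilinear with respect to the ring
restrictions. -/
structure Mod (S : FRS) : Type 1 where
  M : S.X → Type
  [ab : ∀ x, AddCommGroup (M x)]
  [mod : ∀ x, Module (S.O x) (M x)]
  res : ∀ {x y : S.X}, x ≤ y → M x →+ M y
  res_smul : ∀ {x y : S.X} (h : x ≤ y) (a : S.O x) (m : M x),
      res h (a • m) = S.res h a • res h m
  res_refl : ∀ (x : S.X) (m : M x), res (le_refl x) m = m
  res_trans : ∀ {x y z : S.X} (h₁ : x ≤ y) (h₂ : y ≤ z) (m : M x),
      res h₂ (res h₁ m) = res (h₁.trans h₂) m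

attribute [instance] Mod.ab Mod.mod

variable {S : FRS}

/-- A module sheaf `M` is quasi-coherent iff for all `x ≤ y` the natural map
`M_x ⊗_{O_x} O_y → M_y`, `m ⊗ b ↦ b • (res m)` (characterized here on simple tensors),
is an isomorphism. -/
def Mod.IsQcoh (M : S.Mod) : Prop :=
  ∀ ⦃x y : S.X⦄ (h : x ≤ y),
    letI : Module (S.O x) (S.O y) := Module.compHom _ (S.res h)
    ∀ ψ : (TensorProduct (S.O x) (M.M x) (S.O y)) →+ M.M y,
      (∀ (m : M.M x) (b : S.O y), ψ (m ⊗ₜ[S.O x] b) = b • M.res h m) →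
      Function.Bijective ψ

end FRS
namespace FRS

variable {S : FRS}

/-- A morphism of module sheaves on a finite ringed space: an `O_x`-linear map on each stalk,
commuting with the restrictions. -/
structure ModHom (M N : S.Mod) where
  map : ∀ x : S.X, M.M x →ₗ[S.O x] N.M x
  comm : ∀ {x y : S.X} (h : x ≤ y) (m : M.M x),
      N.res h (map x m) = map y (M.res h m)

/-- The kernel of a morphism of module sheaves. -/
noncomputable def ModHom.ker {M N : S.Mod} (f : ModHom M N) : S.Mod where
  M x := ↥(LinearMap.ker (f.map x))
  res {x y} h :=
    { toFun := fun m => ⟨M.res h m.1, by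
        have h1 : f.map y (M.res h m.1) = N.res h (f.map x m.1) := (f.comm h m.1).symm
        have h2 : f.map x m.1 = 0 := m.2
        simp only [LinearMap.mem_ker, h1, h2, map_zero]⟩
      map_zero' := by
        ext
        simp
      map_add' := fun a b => by
        ext
        simp }
  res_smul h a m := by
    ext
    exact M.res_smul h a m.1
  res_refl x m := by
    ext
    exact M.res_refl x m.1
  res_trans h₁ h₂ m := by
    ext
    exact M.res_trans h₁ h₂ m.1

/-- The restriction of a module sheaf to an open subspace. -/
noncomputable def Mod.restrictTo (M : S.Mod) (U : Set S.X) : (S.restrict U).Mod where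
  M u := M.M u.1
  ab u := inferInstanceAs (AddCommGroup (M.M u.1))
  mod u := M.mod u.1
  res h := M.res h
  res_smul h a m := M.res_smul h a m
  res_refl u m := M.res_refl u.1 m
  res_trans h₁ h₂ m := M.res_trans h₁ h₂ m

/-- The free module sheaf on an index type `I`: its stalk at `x` is `O_x^{(I)}`. -/
noncomputable def freeMod (S : FRS) (I : Type) : S.Mod where
  M x := I →₀ S.O x
  res h := Finsupp.mapRange.addMonoidHom (S.res h).toAddMonoidHom
  res_smul h a m := by
    ext i
    simp
  res_refl x m := by
    ext i
    simp [RingHom.congr_fun (S.res_refl x)]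
  res_trans h₁ h₂ m := by
    ext i
    have := RingHom.congr_fun (S.res_trans h₁ h₂) (m i)
    simpa using this

/-- A module sheaf admits local presentations: near every point there are index types `I`, `J`
and an exact sequence `O|_U^{(I)} → O|_U^{(J)} → M|_U → 0` (exactness being measured stalkwise,
as is appropriate on a finite space). -/
def Mod.HasLocalPresentation (M : S.Mod) : Prop :=
  ∀ x : S.X, ∃ (U : Set S.X) (_ : IsUpperSet U) (_ : x ∈ U) (I J : Type)
    (φ : ModHom (freeMod (S.restrict U) I) (freeMod (S.restrict U) J))
    (ψ : ModHom (freeMod (S.restrict U) J) (M.restrictTo U)),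
      (∀ u : ↥U, Function.Surjective (ψ.map u)) ∧
      (∀ u : (S.restrict U).X, LinearMap.range (φ.map u) = LinearMap.ker (ψ.map u))

end FRS


/-! Both directions rest on one comparison. If `O_x^{(I)} → O_x^{(J)} → M_x → 0` is a free
presentation at `x` and `x ≤ y`, then tensoring with `O_y` keeps it right exact and turns
`O_x^{(K)}` into `O_y^{(K)}`, so comparing it with the restricted sequence
`O_y^{(I)} → O_y^{(J)} → M_y` shows (five lemma) that `M_x ⊗_{O_x} O_y → M_y` is bijective exactly
when the restricted sequence is again a presentation. A local presentation therefore makes `M`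
quasi-coherent; conversely, if `M` is quasi-coherent, any presentation of the stalk `M_x`, spread
over `U_x` by restriction, is a presentation of `M|_{U_x}` at every point. -/

open TensorProduct Function

theorem Finsupp.map_linearCombination_of_map_smul {R R' N N' ι : Type*} [Semiring R] [Semiring R']
    [AddCommMonoid N] [Module R N] [AddCommMonoid N'] [Module R' N'] (ρ : R →+* R') (t : N →+ N')
    (ht : ∀ (r : R) (n : N), t (r • n) = ρ r • t n) (v : ι → N) (l : ι →₀ R) :
    t (linearCombination R v l) = linearCombination R' (t ∘ v) (l.mapRange ρ (map_zero ρ)) := by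
  simp [linearCombination_apply, map_finsuppSum, ht, sum_mapRange_index]

section BaseChange

variable {R R' : Type*} [CommRing R] [CommRing R']

section Comparison

variable [Module R R'] {A B C A' B' C' : Type*}
  [AddCommGroup A] [AddCommGroup B] [AddCommGroup C] [Module R A] [Module R B] [Module R C]
  [AddCommGroup A'] [AddCommGroup B'] [AddCommGroup C'] [Module R' A'] [Module R' B'] [Module R' C']

theorem comp_eq_comp_rTensor {f : A →ₗ[R] B} {f' : A' →ₗ[R'] B'} {tA : A → A'} {tB : B → B'}
    (hf : ∀ a, f' (tA a) = tB (f a)) {cA : A ⊗[R] R' →+ A'} {cB : B ⊗[R] R' →+ B'}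
    (hcA : ∀ a r, cA (a ⊗ₜ r) = r • tA a) (hcB : ∀ b r, cB (b ⊗ₜ r) = r • tB b) :
    f'.toAddMonoidHom.comp cA = cB.comp (f.rTensor R').toAddMonoidHom := by
  ext t
  induction t using TensorProduct.induction_on with
  | zero => simp
  | tmul a r => simp [hcA, hcB, hf]
  | add s t hs ht => simp_all

theorem bijective_comparison_iff_exact_and_surjective {f : A →ₗ[R] B} {g : B →ₗ[R] C}
    (hfg : Exact f g) (hg : Surjective g) {f' : A' →ₗ[R'] B'} {g' : B' →ₗ[R'] C'}
    {tA : A → A'} {tB : B → B'} {tC : C → C'}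
    (htf : ∀ a, f' (tA a) = tB (f a)) (htg : ∀ b, g' (tB b) = tC (g b))
    {cA : A ⊗[R] R' →+ A'} {cB : B ⊗[R] R' →+ B'} {cC : C ⊗[R] R' →+ C'}
    (hcA : ∀ a r, cA (a ⊗ₜ r) = r • tA a) (hcB : ∀ b r, cB (b ⊗ₜ r) = r • tB b)
    (hcC : ∀ c r, cC (c ⊗ₜ r) = r • tC c) (hcA_surj : Surjective cA) (hcB_bij : Bijective cB) :
    Bijective cC ↔ Exact f' g' ∧ Surjective g' := by
  have sq₁ := comp_eq_comp_rTensor htf hcA hcB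
  have sq₂ := comp_eq_comp_rTensor htg hcB hcC
  have hfg_R' := rTensor_exact R' hfg hg
  have hg_R' := LinearMap.rTensor_surjective R' hg
  constructor
  · intro hcC_bij
    refine ⟨(AddMonoidHom.exact_iff_of_surjective_of_bijective_of_injective _ _ _ _ _ _ _
      sq₁ sq₂ hcA_surj hcB_bij hcC_bij.1).1 hfg_R', ?_⟩
    have hg'_cB : Surjective (g'.toAddMonoidHom.comp cB) := by
      rw [sq₂]
      exact hcC_bij.2.comp hg_R'
    exact Surjective.of_comp (g := cB) hg'_cB
  · rintro ⟨hfg', hg'⟩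
    exact AddMonoidHom.bijective_of_surjective_of_bijective_of_right_exact _ _ _ _ _ _ _
      sq₁ sq₂ hfg_R' hfg' hcA_surj hcB_bij hg_R' hg'

end Comparison

variable [Algebra R R']

theorem exists_tmul_eq_smul {M N : Type*} [AddCommGroup M] [Module R M] [AddCommGroup N]
    [Module R' N] (t : M →+ N) (ht : ∀ (r : R) (m : M), t (r • m) = algebraMap R R' r • t m) :
    ∃ c : M ⊗[R] R' →+ N, ∀ m r, c (m ⊗ₜ r) = r • t m :=
  ⟨liftAddHom ((smulAddHom R' N).flip.comp t) fun r m b => by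
    simp [ht, smul_smul, Algebra.smul_def, mul_comm], fun _ _ => rfl⟩

theorem finsuppScalarLeft_tmul_eq_smul_mapRange {ι : Type*} [DecidableEq ι] (l : ι →₀ R)
    (r : R') :
    finsuppScalarLeft R R' ι (l ⊗ₜ r) = r • l.mapRange (algebraMap R R') (map_zero _) := by
  ext i
  simp [Algebra.smul_def, mul_comm]

end BaseChange

namespace FRS

variable {T : FRS}

theorem ModHom.bijective_comparison_iff {I J : Type} {M : T.Mod}
    {φ : ModHom (freeMod T I) (freeMod T J)} {ψ : ModHom (freeMod T J) M} {x y : T.X} (h : x ≤ y)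
    (hφψ : Exact (φ.map x) (ψ.map x)) (hψ : Surjective (ψ.map x)) :
    -- definitionally the `Module.compHom` structure used in `Mod.IsQcoh`
    letI := (T.res h).toAlgebra
    ∀ c : M.M x ⊗[T.O x] T.O y →+ M.M y, (∀ m r, c (m ⊗ₜ r) = r • M.res h m) →
      (Bijective c ↔ Exact (φ.map y) (ψ.map y) ∧ Surjective (ψ.map y)) := by
  let _ := (T.res h).toAlgebra
  classical
  intro c hc
  exact bijective_comparison_iff_exact_and_surjective hφψ hψ (fun a => (φ.comm h a).symm)
    (fun b => (ψ.comm h b).symm) (cA := (finsuppScalarLeft (T.O x) (T.O y) I).toAddMonoidHom)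
    (cB := (finsuppScalarLeft (T.O x) (T.O y) J).toAddMonoidHom)
    finsuppScalarLeft_tmul_eq_smul_mapRange finsuppScalarLeft_tmul_eq_smul_mapRange hc
    (LinearEquiv.surjective _) (LinearEquiv.bijective _)

def Mod.HasPresentation (M : T.Mod) : Prop :=
  ∃ (I J : Type) (φ : ModHom (freeMod T I) (freeMod T J)) (ψ : ModHom (freeMod T J) M),
    ∀ x, Exact (φ.map x) (ψ.map x) ∧ Surjective (ψ.map x)

theorem Mod.hasLocalPresentation_iff {M : T.Mod} : M.HasLocalPresentation ↔
    ∀ x, ∃ U, IsUpperSet U ∧ x ∈ U ∧ (M.restrictTo U).HasPresentation := by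
  simp only [HasLocalPresentation, HasPresentation, LinearMap.exact_iff, forall_and, exists_prop,
    @eq_comm _ (LinearMap.ker _), and_comm]
  rfl

theorem Mod.HasPresentation.isQcoh {M : T.Mod} (hM : M.HasPresentation) : M.IsQcoh := by
  obtain ⟨I, J, φ, ψ, hφψ⟩ := hM
  intro x y h c hc
  exact (ModHom.bijective_comparison_iff h (hφψ x).1 (hφψ x).2 c hc).2 (hφψ y)

theorem Mod.isQcoh_of_forall_restrictTo {M : T.Mod}
    (hM : ∀ x, ∃ U, IsUpperSet U ∧ x ∈ U ∧ (M.restrictTo U).IsQcoh) : M.IsQcoh := by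
  intro x y h
  obtain ⟨U, hU, hxU, hMU⟩ := hM x
  exact hMU (show (⟨x, hxU⟩ : (T.restrict U).X) ≤ ⟨y, hU h hxU⟩ from h)

theorem Mod.IsQcoh.restrictTo {M : T.Mod} (hM : M.IsQcoh) (U : Set T.X) :
    (M.restrictTo U).IsQcoh :=
  fun _ _ h => hM h

section LeastPoint

variable (N : T.Mod) {x₀ : T.X} (hx₀ : ∀ x, x₀ ≤ x)

noncomputable def ModHom.linearCombination {K : Type} (v : K → N.M x₀) :
    ModHom (freeMod T K) N where
  map x := (Finsupp.linearCombination (T.O x) fun k => N.res (hx₀ x) (v k) :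
    (K →₀ T.O x) →ₗ[T.O x] N.M x)
  comm {x y} h l := by
    refine (Finsupp.map_linearCombination_of_map_smul (T.res h) (N.res h) (N.res_smul h) _
      l).trans ?_
    congr 2
    funext k
    exact N.res_trans (hx₀ x) h (v k)

theorem ModHom.linearCombination_map_self_apply {K : Type} (v : K → N.M x₀)
    (l : (freeMod T K).M x₀) :
    (ModHom.linearCombination N hx₀ v).map x₀ l = Finsupp.linearCombination (T.O x₀) v l := by
  simp only [ModHom.linearCombination, N.res_refl]
  rfl

end LeastPoint

theorem Mod.IsQcoh.hasPresentation {M : T.Mod} (hM : M.IsQcoh) {x₀ : T.X}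
    (hx₀ : ∀ x, x₀ ≤ x) : M.HasPresentation := by
  let P := Module.Presentation.tautological (T.O x₀) (M.M x₀)
  let φ := ModHom.linearCombination (freeMod T P.G) hx₀ P.relation
  let ψ := ModHom.linearCombination M hx₀ P.var
  have hφ₀ := ModHom.linearCombination_map_self_apply (freeMod T P.G) hx₀ P.relation
  have hψ₀ := ModHom.linearCombination_map_self_apply M hx₀ P.var
  have hφψ₀ : Exact (φ.map x₀) (ψ.map x₀) ∧ Surjective (ψ.map x₀) := by
    refine ⟨fun l => ?_, fun m => ?_⟩
    · simp only [φ, ψ, hφ₀, hψ₀, Set.mem_range]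
      exact P.exact l
    · simp only [ψ, hψ₀]
      exact P.surjective_π m
  refine ⟨P.R, P.G, φ, ψ, fun x => ?_⟩
  let _ := (T.res (hx₀ x)).toAlgebra
  obtain ⟨c, hc⟩ := exists_tmul_eq_smul (M.res (hx₀ x)) (M.res_smul (hx₀ x))
  exact (ModHom.bijective_comparison_iff (hx₀ x) hφψ₀.1 hφψ₀.2 c hc).1 (hM (hx₀ x) c hc)

end FRS

/-- On a finite ringed space, an `O`-module `M` is quasi-coherent (it admits
local presentations `O|_U^{(I)} → O|_U^{(J)} → M|_U → 0`) if and only if for all `x ≤ y` the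
natural map `M_x ⊗_{O_x} O_y → M_y` is an isomorphism. -/
theorem FRS.Mod.hasLocalPresentation_iff_isQcoh {S : FRS} (M : S.Mod) :
    M.HasLocalPresentation ↔ M.IsQcoh := by
  rw [Mod.hasLocalPresentation_iff]
  refine ⟨fun hM => Mod.isQcoh_of_forall_restrictTo fun x => ?_, fun hM x => ?_⟩
  · obtain ⟨U, hU, hxU, hMU⟩ := hM x
    exact ⟨U, hU, hxU, hMU.isQcoh⟩
  · exact ⟨Set.Ici x, isUpperSet_Ici x, Set.self_mem_Ici,
      (hM.restrictTo _).hasPresentation (x₀ := ⟨x, le_rfl⟩) fun u => u.2⟩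
end

section
/- A ringed finite space X is an affine finite space if and only if (1) the morphism O(X) → ∏_{x∈X} O_x is faithfully flat, and (2) for all y, y' ∈ X, the morphism O_y ⊗_{O(X)} O_{y'} → ∏_{z ∈ U_y ∩ U_{y'}} O_z is faithfully flat. -/
set_option synthInstance.maxHeartbeats 400000
set_option maxHeartbeats 1600000
set_option linter.unusedVariables false
set_option linter.unusedSectionVars false


open scoped TensorProduct

section FFLGeneral
variable {A B C : Type*} [CommRing A] [CommRing B] [CommRing C]

lemma ffl_of_bijective {f : A →+* B} (hf : Function.Bijective f) : f.IsFaithfullyFlatHom := by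
  letI := f.toAlgebra
  have hb : Function.Bijective (Algebra.linearMap A B) := by
    simpa [Algebra.linearMap, RingHom.algebraMap_toAlgebra] using hf
  have : Module.FaithfullyFlat A B :=
    Module.FaithfullyFlat.of_linearEquiv A A (N := B) (LinearEquiv.ofBijective (Algebra.linearMap A B) hb).symm
  exact this

lemma ffl_comp {f : A →+* B} {g : B →+* C} (hf : f.IsFaithfullyFlatHom)
    (hg : g.IsFaithfullyFlatHom) : (g.comp f).IsFaithfullyFlatHom := by
  letI := f.toAlgebra
  letI := g.toAlgebra
  letI := (g.comp f).toAlgebra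
  haveI : IsScalarTower A B C := IsScalarTower.of_algebraMap_eq fun a => rfl
  haveI : Module.FaithfullyFlat A B := hf
  haveI : Module.FaithfullyFlat B C := hg
  have : Module.FaithfullyFlat A C := Module.FaithfullyFlat.trans A B C
  exact this

lemma ffl_congr {f g : A →+* B} (h : f = g) (hf : f.IsFaithfullyFlatHom) :
    g.IsFaithfullyFlatHom := h ▸ hf

lemma ffl_cancel_bij {f : A →+* B} {g : B →+* C} (h : (g.comp f).IsFaithfullyFlatHom)
    (hf : Function.Bijective f) : g.IsFaithfullyFlatHom := by
  let e := RingEquiv.ofBijective f hf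
  have : g = (g.comp f).comp (e.symm : B →+* A) := by
    ext b
    simp only [RingHom.comp_apply, RingHom.coe_coe]
    rw [show f ((RingEquiv.ofBijective f hf).symm b) = (RingEquiv.ofBijective f hf) ((RingEquiv.ofBijective f hf).symm b) from rfl, RingEquiv.apply_symm_apply]
  exact ffl_congr this.symm (ffl_comp (ffl_of_bijective e.symm.bijective) h)

lemma ffl_injective {f : A →+* B} (hf : f.IsFaithfullyFlatHom) : Function.Injective f := by
  letI := f.toAlgebra
  haveI : Module.FaithfullyFlat A B := hf
  have key : ∀ x : A, f x = 0 → x = 0 := by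
    intro x hx
    have hz : (LinearMap.toSpanSingleton A A x).lTensor B = 0 := by
      ext b
      show b ⊗ₜ[A] ((1:A) • x) = 0
      have h1 : b ⊗ₜ[A] ((1:A) • x) = x • (b ⊗ₜ[A] (1 : A)) := by
        rw [one_smul, ← TensorProduct.tmul_smul, smul_eq_mul, mul_one]
      rw [h1, TensorProduct.smul_tmul']
      have h2 : x • b = f x * b := rfl
      rw [h2, hx, zero_mul, TensorProduct.zero_tmul]
    have := (Module.FaithfullyFlat.zero_iff_lTensor_zero A B (LinearMap.toSpanSingleton A A x)).2 hz
    simpa using LinearMap.congr_fun this 1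
  intro a a' h
  have : a - a' = 0 := key _ (by rw [map_sub, h, sub_self])
  exact sub_eq_zero.1 this
end FFLGeneral

section Amitsur
variable (A B : Type*) [CommRing A] [CommRing B] [Algebra A B] [Module.FaithfullyFlat A B]

/-- The Amitsur differential `b ↦ 1 ⊗ b - b ⊗ 1`. -/
noncomputable def amitsurD : B →ₗ[A] B ⊗[A] B :=
  TensorProduct.mk A B B 1 - (TensorProduct.mk A B B).flip 1

omit [Module.FaithfullyFlat A B] in
lemma amitsurD_apply (b : B) : amitsurD A B b = 1 ⊗ₜ[A] b - b ⊗ₜ[A] 1 := rfl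

lemma amitsur_exact : Function.Exact (Algebra.linearMap A B) (amitsurD A B) := by
  apply Module.FaithfullyFlat.lTensor_reflects_exact A B
  set μ : B ⊗[A] B →ₗ[A] B := LinearMap.mul' A B with hμ
  set σ : B →ₗ[A] B ⊗[A] B := (TensorProduct.mk A B B).flip 1 with hσ
  set h : B ⊗[A] (B ⊗[A] B) →ₗ[A] B ⊗[A] B :=
    (LinearMap.mul' A B).rTensor B ∘ₗ (TensorProduct.assoc A B B B).symm.toLinearMap with hh
  have key : ∀ ξ : B ⊗[A] B, h ((amitsurD A B).lTensor B ξ) = ξ - σ (μ ξ) := by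
    intro ξ
    induction ξ using TensorProduct.induction_on with
    | zero => simp
    | tmul x y =>
        rw [LinearMap.lTensor_tmul, amitsurD_apply, TensorProduct.tmul_sub, map_sub, hh]
        simp only [LinearMap.coe_comp, Function.comp_apply, LinearEquiv.coe_coe,
          TensorProduct.assoc_symm_tmul, LinearMap.rTensor_tmul, LinearMap.mul'_apply, hσ, hμ,
          TensorProduct.mk_apply, LinearMap.flip_apply, mul_one]
    | add ξ₁ ξ₂ ih₁ ih₂ =>
        rw [map_add, map_add, ih₁, ih₂, map_add, map_add]
        abel
  have comp0 : ∀ a : A, amitsurD A B (algebraMap A B a) = 0 := by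
    intro a
    rw [amitsurD_apply, Algebra.algebraMap_eq_smul_one, TensorProduct.tmul_smul,
      TensorProduct.smul_tmul', sub_self]
  intro ξ
  constructor
  · intro hz
    have h1 := key ξ
    rw [hz, map_zero] at h1
    have h2 : ξ = σ (μ ξ) := sub_eq_zero.mp h1.symm
    refine ⟨(μ ξ) ⊗ₜ[A] 1, ?_⟩
    rw [LinearMap.lTensor_tmul]
    rw [show (Algebra.linearMap A B) (1:A) = (1:B) from map_one (algebraMap A B)]
    exact h2.symm
  · rintro ⟨η, rfl⟩
    induction η using TensorProduct.induction_on with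
    | zero => simp
    | tmul x a =>
        rw [LinearMap.lTensor_tmul, LinearMap.lTensor_tmul]
        rw [show (Algebra.linearMap A B) a = algebraMap A B a from rfl, comp0,
          TensorProduct.tmul_zero]
    | add ξ₁ ξ₂ ih₁ ih₂ => rw [map_add, map_add, ih₁, ih₂, add_zero]

/-- Descent of elements: if `1 ⊗ b = b ⊗ 1` then `b` comes from `A`. -/
lemma amitsur_descent (b : B) (hb : (1:B) ⊗ₜ[A] b = b ⊗ₜ[A] 1) :
    ∃ a : A, algebraMap A B a = b := by
  obtain ⟨a, ha⟩ := (amitsur_exact A B b).1 (by rw [amitsurD_apply, hb, sub_self])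
  exact ⟨a, ha⟩
end Amitsur


section PiTensorZero
variable {A : Type*} [CommRing A]

lemma tmul_sub_comm_zero {M N : Type*} [AddCommGroup M] [AddCommGroup N]
    [Module A M] [Module A N] {x x' : N} {y y' : M}
    (h : y ⊗ₜ[A] x - y' ⊗ₜ[A] x' = 0) : x ⊗ₜ[A] y - x' ⊗ₜ[A] y' = 0 := by
  refine (LinearEquiv.map_eq_zero_iff (TensorProduct.comm A N M)).1 ?_
  rw [map_sub, TensorProduct.comm_tmul, TensorProduct.comm_tmul]
  exact h

lemma pi_tensor_sub_eq_zero {ι : Type*} [Fintype ι] [DecidableEq ι]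
    (M : ι → Type*) [∀ i, AddCommGroup (M i)] [∀ i, Module A (M i)]
    {N : Type*} [AddCommGroup N] [Module A N]
    (x x' : N) (f f' : ∀ i, M i)
    (h : ∀ i, x ⊗ₜ[A] (f i) - x' ⊗ₜ[A] (f' i) = 0) :
    x ⊗ₜ[A] f - x' ⊗ₜ[A] f' = 0 := by
  refine (LinearEquiv.map_eq_zero_iff (TensorProduct.piRight A A N M)).1 ?_
  funext i
  have : (TensorProduct.piRight A A N M) (x ⊗ₜ[A] f - x' ⊗ₜ[A] f')
      = (fun j => x ⊗ₜ[A] (f j)) - (fun j => x' ⊗ₜ[A] (f' j)) := by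
    rw [map_sub, TensorProduct.piRight_apply, TensorProduct.piRight_apply,
      TensorProduct.piRightHom_tmul, TensorProduct.piRightHom_tmul]
  rw [this]
  show x ⊗ₜ[A] (f i) - x' ⊗ₜ[A] (f' i) = 0
  exact h i

end PiTensorZero


namespace FRS

variable (S : FRS)

lemma res_res {x y z : S.X} (h₁ : x ≤ y) (h₂ : y ≤ z) (a : S.O x) :
    S.res h₂ (S.res h₁ a) = S.res (h₁.trans h₂) a :=
  RingHom.congr_fun (S.res_trans h₁ h₂) a

lemma res_toStalk {x z : S.X} (h : x ≤ z) (r : S.Gamma Set.univ) :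
    S.res h (S.toStalk x r) = S.toStalk z r :=
  r.2 (z := ⟨x, Set.mem_univ x⟩) (w := ⟨z, Set.mem_univ z⟩) h

/-- The target of the canonical tensor-to-product map for the pair `x, y`. -/
abbrev PP (x y : S.X) : Type := ∀ z : ↥(Set.Ici x ∩ Set.Ici y), S.O z.1

/-- The left canonical algebra map `O x →ₐ O(U_x ∩ U_y)`-like map into the product. -/
noncomputable def fLeft (x y : S.X) : S.O x →ₐ[S.Gamma Set.univ] S.PP x y :=
  { toRingHom := Pi.ringHom fun z => S.res z.2.1
    commutes' := fun r => by
      funext z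
      exact S.res_toStalk z.2.1 r }

noncomputable def fRight (x y : S.X) : S.O y →ₐ[S.Gamma Set.univ] S.PP x y :=
  { toRingHom := Pi.ringHom fun z => S.res z.2.2
    commutes' := fun r => by
      funext z
      exact S.res_toStalk z.2.2 r }

/-- The canonical morphism `O_x ⊗ O_y → ∏_{z ∈ U_x ∩ U_y} O_z`. -/
noncomputable def psi (x y : S.X) :
    ((S.O x) ⊗[S.Gamma Set.univ] (S.O y)) →+* S.PP x y :=
  (Algebra.TensorProduct.productMap (S.fLeft x y) (S.fRight x y)).toRingHom

lemma psi_tmul (x y : S.X) (a : S.O x) (b : S.O y) (z : ↥(Set.Ici x ∩ Set.Ici y)) :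
    S.psi x y (a ⊗ₜ b) z = S.res z.2.1 a * S.res z.2.2 b := rfl

lemma psi_mem_sect (x y : S.X) (t : (S.O x) ⊗[S.Gamma Set.univ] (S.O y)) :
    S.psi x y t ∈ S.sect (Set.Ici x ∩ Set.Ici y) := by
  induction t using TensorProduct.induction_on with
  | zero => rw [map_zero]; exact (S.sect _).zero_mem
  | tmul a b =>
      intro z w h
      rw [S.psi_tmul, S.psi_tmul, map_mul]
      exact congrArg₂ (· * ·) (S.res_res _ _ a) (S.res_res _ _ b)
  | add t₁ t₂ ih₁ ih₂ => rw [map_add]; exact (S.sect _).add_mem ih₁ ih₂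

/-- The canonical morphism `O_x ⊗ O_y → O(U_x ∩ U_y)`. -/
noncomputable def psiGamma (x y : S.X) :
    ((S.O x) ⊗[S.Gamma Set.univ] (S.O y)) →+* S.Gamma (Set.Ici x ∩ Set.Ici y) :=
  (S.psi x y).codRestrict (S.sect (Set.Ici x ∩ Set.Ici y)) (S.psi_mem_sect x y)

lemma sectToProd_comp_psiGamma (x y : S.X) :
    (S.sectToProd (Set.Ici x ∩ Set.Ici y)).comp (S.psiGamma x y) = S.psi x y := rfl

/-- Uniqueness: any ring hom on the tensor product with the prescribed values on simple
tensors agrees with `psi`. -/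
lemma eq_psi {x y : S.X}
    (ψ : ((S.O x) ⊗[S.Gamma Set.univ] (S.O y)) →+* S.PP x y)
    (hψ : ∀ (a : S.O x) (b : S.O y) (z : ↥(Set.Ici x ∩ Set.Ici y)),
      ψ (a ⊗ₜ b) z = S.res z.2.1 a * S.res z.2.2 b) :
    ψ = S.psi x y := by
  refine RingHom.ext fun t => ?_
  induction t using TensorProduct.induction_on with
  | zero => rw [map_zero, map_zero]
  | tmul a b => funext z; rw [hψ, S.psi_tmul]
  | add t₁ t₂ ih₁ ih₂ => rw [map_add, map_add, ih₁, ih₂]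

lemma eq_psiGamma {x y : S.X}
    (ψ : ((S.O x) ⊗[S.Gamma Set.univ] (S.O y)) →+* S.Gamma (Set.Ici x ∩ Set.Ici y))
    (hψ : ∀ (a : S.O x) (b : S.O y) (z : ↥(Set.Ici x ∩ Set.Ici y)),
      ((ψ (a ⊗ₜ b)) : ∀ w : ↥(Set.Ici x ∩ Set.Ici y), S.O w.1) z
        = S.res z.2.1 a * S.res z.2.2 b) :
    ψ = S.psiGamma x y := by
  refine RingHom.ext fun t => ?_
  have h1 : (S.sectToProd _).comp ψ = S.psi x y := S.eq_psi _ (fun a b z => hψ a b z)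
  have h2 := RingHom.congr_fun h1 t
  apply Subtype.ext
  exact h2

end FRS


namespace FRS

variable (S : FRS) (y y' : S.X)

lemma toStalk_algebraMap (x : S.X) (r : S.Gamma Set.univ) :
    algebraMap (S.Gamma Set.univ) (S.O x) r = S.toStalk x r := rfl

/-- Evaluation of the canonical map `psi` at a point of `U_y ∩ U_{y'}`. -/
noncomputable def evA (z : ↥(Set.Ici y ∩ Set.Ici y')) :
    ((S.O y) ⊗[S.Gamma Set.univ] (S.O y')) →+* S.O z.1 :=
  (Pi.evalRingHom _ z).comp (S.psi y y')

lemma evA_tmul (z : ↥(Set.Ici y ∩ Set.Ici y')) (a : S.O y) (b : S.O y') :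
    S.evA y y' z (a ⊗ₜ b) = S.res z.2.1 a * S.res z.2.2 b := rfl

lemma evA_compat {z w : ↥(Set.Ici y ∩ Set.Ici y')} (h : z.1 ≤ w.1)
    (t : (S.O y) ⊗[S.Gamma Set.univ] (S.O y')) :
    S.res h (S.evA y y' z t) = S.evA y y' w t :=
  S.psi_mem_sect y y' t (z := z) (w := w) h

lemma evA_algebraMap (z : ↥(Set.Ici y ∩ Set.Ici y')) (r : S.Gamma Set.univ) :
    S.evA y y' z (algebraMap (S.Gamma Set.univ) ((S.O y) ⊗[S.Gamma Set.univ] (S.O y')) r)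
      = S.toStalk z.1 r := by
  rw [show algebraMap (S.Gamma Set.univ) ((S.O y) ⊗[S.Gamma Set.univ] (S.O y')) r
      = (algebraMap (S.Gamma Set.univ) (S.O y) r) ⊗ₜ (1 : S.O y') from rfl]
  rw [S.evA_tmul, map_one, mul_one, S.toStalk_algebraMap]
  exact S.res_toStalk z.2.1 r

variable {y y'} (z w : ↥(Set.Ici y ∩ Set.Ici y'))

/-- Membership of points above `z` in `U_y ∩ U_{y'}`. -/
lemma mem_above (v : ↥(Set.Ici z.1 ∩ Set.Ici w.1)) : v.1 ∈ Set.Ici y ∩ Set.Ici y' :=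
  ⟨z.2.1.trans v.2.1, z.2.2.trans v.2.1⟩

/-- The canonical map `O_z ⊗_A O_w → ∏_{v ∈ U_z ∩ U_w} O_v`, where `A = O_y ⊗ O_{y'}`,
as an `A`-linear map. -/
noncomputable def theta :
    letI := (S.evA y y' z).toAlgebra
    letI := (S.evA y y' w).toAlgebra
    letI : ∀ v : ↥(Set.Ici z.1 ∩ Set.Ici w.1),
        Algebra ((S.O y) ⊗[S.Gamma Set.univ] (S.O y')) (S.O v.1) :=
      fun v => (S.evA y y' ⟨v.1, S.mem_above z w v⟩).toAlgebra
    ((S.O z.1) ⊗[(S.O y) ⊗[S.Gamma Set.univ] (S.O y')] (S.O w.1)) →ₗ[(S.O y) ⊗[S.Gamma Set.univ] (S.O y')]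
      (S.PP z.1 w.1) :=
  letI := (S.evA y y' z).toAlgebra
  letI := (S.evA y y' w).toAlgebra
  letI : ∀ v : ↥(Set.Ici z.1 ∩ Set.Ici w.1),
      Algebra ((S.O y) ⊗[S.Gamma Set.univ] (S.O y')) (S.O v.1) :=
    fun v => (S.evA y y' ⟨v.1, S.mem_above z w v⟩).toAlgebra
  TensorProduct.lift
    { toFun := fun a =>
        { toFun := fun b => fun v => S.res v.2.1 a * S.res v.2.2 b
          map_add' := fun b₁ b₂ => by
            funext v
            show S.res v.2.1 a * S.res v.2.2 (b₁ + b₂) = _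
            rw [map_add, mul_add]
            rfl
          map_smul' := fun t b => by
            funext v
            show S.res v.2.1 a * S.res v.2.2 (S.evA y y' w t * b)
              = S.evA y y' ⟨v.1, S.mem_above z w v⟩ t * (S.res v.2.1 a * S.res v.2.2 b)
            rw [map_mul, S.evA_compat y y' (w := ⟨v.1, S.mem_above z w v⟩) v.2.2 t]
            ring }
      map_add' := fun a₁ a₂ => by
        refine LinearMap.ext fun b => ?_
        funext v
        show S.res v.2.1 (a₁ + a₂) * S.res v.2.2 b = _
        rw [map_add, add_mul]
        rfl
      map_smul' := fun t a => by
        refine LinearMap.ext fun b => ?_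
        funext v
        show S.res v.2.1 (S.evA y y' z t * a) * S.res v.2.2 b
          = S.evA y y' ⟨v.1, S.mem_above z w v⟩ t * (S.res v.2.1 a * S.res v.2.2 b)
        rw [map_mul, S.evA_compat y y' (w := ⟨v.1, S.mem_above z w v⟩) v.2.1 t]
        ring }

lemma theta_tmul (a : S.O z.1) (b : S.O w.1) :
    letI := (S.evA y y' z).toAlgebra
    letI := (S.evA y y' w).toAlgebra
    S.theta z w (a ⊗ₜ b) = fun v : ↥(Set.Ici z.1 ∩ Set.Ici w.1) =>
      S.res v.2.1 a * S.res v.2.2 b := rfl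

lemma theta_injective (hfl : (S.psi z.1 w.1).IsFaithfullyFlatHom) :
    letI := (S.evA y y' z).toAlgebra
    letI := (S.evA y y' w).toAlgebra
    Function.Injective (S.theta z w) := by
  letI := (S.evA y y' z).toAlgebra
  letI := (S.evA y y' w).toAlgebra
  letI : Module (S.Gamma Set.univ)
      ((S.O z.1) ⊗[(S.O y) ⊗[S.Gamma Set.univ] (S.O y')] (S.O w.1)) :=
    Module.compHom _ (algebraMap (S.Gamma Set.univ) ((S.O y) ⊗[S.Gamma Set.univ] (S.O y')))
  letI : @SMulCommClass (S.Gamma Set.univ) (S.Gamma Set.univ)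
      ((S.O z.1) ⊗[(S.O y) ⊗[S.Gamma Set.univ] (S.O y')] (S.O w.1))
      (Module.compHom _ (algebraMap (S.Gamma Set.univ) ((S.O y) ⊗[S.Gamma Set.univ] (S.O y')))).toSMul
      (Module.compHom _ (algebraMap (S.Gamma Set.univ) ((S.O y) ⊗[S.Gamma Set.univ] (S.O y')))).toSMul := by
    refine @SMulCommClass.mk _ _ _
      (Module.compHom _ (algebraMap (S.Gamma Set.univ) ((S.O y) ⊗[S.Gamma Set.univ] (S.O y')))).toSMul
      (Module.compHom _ (algebraMap (S.Gamma Set.univ) ((S.O y) ⊗[S.Gamma Set.univ] (S.O y')))).toSMul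
      fun r r' d => ?_
    show (algebraMap (S.Gamma Set.univ) ((S.O y) ⊗[S.Gamma Set.univ] (S.O y')) r) •
        ((algebraMap (S.Gamma Set.univ) ((S.O y) ⊗[S.Gamma Set.univ] (S.O y')) r') • d)
      = (algebraMap (S.Gamma Set.univ) ((S.O y) ⊗[S.Gamma Set.univ] (S.O y')) r') •
        ((algebraMap (S.Gamma Set.univ) ((S.O y) ⊗[S.Gamma Set.univ] (S.O y')) r) • d)
    rw [smul_smul, smul_smul, mul_comm]
  -- the R-linear map q : O_z ⊗[R] O_w → O_z ⊗[A] O_w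
  set q : ((S.O z.1) ⊗[S.Gamma Set.univ] (S.O w.1)) →ₗ[S.Gamma Set.univ]
      ((S.O z.1) ⊗[(S.O y) ⊗[S.Gamma Set.univ] (S.O y')] (S.O w.1)) :=
    TensorProduct.lift
    { toFun := fun a =>
        { toFun := fun b => a ⊗ₜ b
          map_add' := fun b₁ b₂ => TensorProduct.tmul_add a b₁ b₂
          map_smul' := fun r b => by
            show a ⊗ₜ[(S.O y) ⊗[S.Gamma Set.univ] (S.O y')] (r • b)
              = (algebraMap (S.Gamma Set.univ) ((S.O y) ⊗[S.Gamma Set.univ] (S.O y')) r) • (a ⊗ₜ[(S.O y) ⊗[S.Gamma Set.univ] (S.O y')] b)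
            rw [← TensorProduct.tmul_smul]
            congr 1
            show r • b = S.evA y y' w (algebraMap _ _ r) * b
            rw [S.evA_algebraMap]
            rfl }
      map_add' := fun a₁ a₂ => LinearMap.ext fun b => TensorProduct.add_tmul a₁ a₂ b
      map_smul' := fun r a => LinearMap.ext fun b => by
        show (r • a) ⊗ₜ[(S.O y) ⊗[S.Gamma Set.univ] (S.O y')] b
          = (algebraMap (S.Gamma Set.univ) ((S.O y) ⊗[S.Gamma Set.univ] (S.O y')) r) • (a ⊗ₜ[(S.O y) ⊗[S.Gamma Set.univ] (S.O y')] b)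
        rw [TensorProduct.smul_tmul']
        congr 1
        show r • a = S.evA y y' z (algebraMap _ _ r) * a
        rw [S.evA_algebraMap]
        rfl } with hq
  have hqt : ∀ (a : S.O z.1) (b : S.O w.1), q (a ⊗ₜ b) = a ⊗ₜ b := fun a b => rfl
  have hsurj : Function.Surjective q := by
    intro d
    induction d using TensorProduct.induction_on with
    | zero => exact ⟨0, map_zero q⟩
    | tmul a b => exact ⟨a ⊗ₜ b, hqt a b⟩
    | add d₁ d₂ ih₁ ih₂ =>
        obtain ⟨t₁, ht₁⟩ := ih₁; obtain ⟨t₂, ht₂⟩ := ih₂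
        exact ⟨t₁ + t₂, by rw [map_add, ht₁, ht₂]⟩
  have hcomp : ∀ t, S.theta z w (q t) = S.psi z.1 w.1 t := by
    intro t
    induction t using TensorProduct.induction_on with
    | zero => rw [map_zero, map_zero, map_zero]
    | tmul a b =>
        rw [hqt, S.theta_tmul]
        funext v
        rw [S.psi_tmul]
    | add t₁ t₂ ih₁ ih₂ => rw [map_add, map_add, map_add, ih₁, ih₂]
  rw [injective_iff_map_eq_zero]
  intro d hd
  obtain ⟨t, rfl⟩ := hsurj d
  have h0 : S.psi z.1 w.1 t = 0 := by rw [← hcomp, hd]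
  rw [show t = 0 from ffl_injective hfl (by rw [h0, map_zero]), map_zero]

lemma psiGamma_surjective {S : FRS} (y y' : S.X)
    (H : ∀ z w : S.X, (S.psi z w).IsFaithfullyFlatHom) :
    Function.Surjective (S.psiGamma y y') := by
  intro s
  letI : Fintype ↥(Set.Ici y ∩ Set.Ici y') := Fintype.ofFinite _
  letI : DecidableEq ↥(Set.Ici y ∩ Set.Ici y') := Classical.decEq _
  letI : ∀ u : ↥(Set.Ici y ∩ Set.Ici y'),
      Algebra ((S.O y) ⊗[S.Gamma Set.univ] (S.O y')) (S.O u.1) :=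
    fun u => (S.evA y y' u).toAlgebra
  haveI hff : Module.FaithfullyFlat ((S.O y) ⊗[S.Gamma Set.univ] (S.O y')) (S.PP y y') :=
    H y y'
  set sP : S.PP y y' := (s : ∀ u : ↥(Set.Ici y ∩ Set.Ici y'), S.O u.1) with hsP
  have key : ∀ (w u : ↥(Set.Ici y ∩ Set.Ici y')),
      ((sP w) ⊗ₜ[(S.O y) ⊗[S.Gamma Set.univ] (S.O y')] (1 : S.O u.1)
        - (1 : S.O w.1) ⊗ₜ[(S.O y) ⊗[S.Gamma Set.univ] (S.O y')] (sP u)) = 0 := by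
    intro w u
    apply S.theta_injective w u (H w.1 u.1)
    rw [map_sub, map_zero, S.theta_tmul, S.theta_tmul]
    funext v
    have h1 := s.2 (z := w) (w := ⟨v.1, S.mem_above w u v⟩) v.2.1
    have h2 := s.2 (z := u) (w := ⟨v.1, S.mem_above w u v⟩) v.2.2
    show S.res v.2.1 (sP w) * S.res v.2.2 (1 : S.O u.1)
        - S.res v.2.1 (1 : S.O w.1) * S.res v.2.2 (sP u) = 0
    rw [map_one, map_one, mul_one, one_mul, h1, h2, sub_self]
  have hxi : (1 : S.PP y y') ⊗ₜ[(S.O y) ⊗[S.Gamma Set.univ] (S.O y')] sP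
      = sP ⊗ₜ[(S.O y) ⊗[S.Gamma Set.univ] (S.O y')] (1 : S.PP y y') := by
    rw [← sub_eq_zero]
    refine pi_tensor_sub_eq_zero _ _ _ _ _ (fun w => ?_)
    refine tmul_sub_comm_zero ?_
    refine pi_tensor_sub_eq_zero _ _ _ _ _ (fun u => ?_)
    exact key w u
  obtain ⟨a, ha⟩ := amitsur_descent ((S.O y) ⊗[S.Gamma Set.univ] (S.O y')) (S.PP y y') sP hxi
  refine ⟨a, ?_⟩
  apply Subtype.ext
  show S.psi y y' a = sP
  rw [← ha]
  rfl

end FRS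

/-- A ringed finite space `X` is an affine finite space if and only if
(1) `O(X) → ∏ₓ O_x` is faithfully flat, and (2) for all `y, y'`, the natural morphism
`O_y ⊗_{O(X)} O_{y'} → ∏_{z ∈ U_y ∩ U_{y'}} O_z` is faithfully flat. -/
theorem FRS.isAffine_iff (S : FRS) :
    S.IsAffine ↔
      (S.toProd.IsFaithfullyFlatHom ∧
        ∀ y y' : S.X,
          ∀ ψ : ((S.O y) ⊗[S.Gamma Set.univ] (S.O y')) →+*
              (∀ z : ↥(Set.Ici y ∩ Set.Ici y'), S.O z.1),
            (∀ (a : S.O y) (b : S.O y') (z : ↥(Set.Ici y ∩ Set.Ici y')),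
                ψ (a ⊗ₜ b) z = S.res z.2.1 a * S.res z.2.2 b) →
            ψ.IsFaithfullyFlatHom) := by
  constructor
  · rintro ⟨h1, h2, h3⟩
    refine ⟨h1, ?_⟩
    intro y y' ψ hψ
    rw [S.eq_psi ψ hψ]
    have hbij : Function.Bijective (S.psiGamma y y') :=
      h2 y y' (S.psiGamma y y') (fun a b z => by
        show S.psi y y' (a ⊗ₜ b) z = _
        rw [S.psi_tmul])
    exact ffl_congr (S.sectToProd_comp_psiGamma y y')
      (ffl_comp (ffl_of_bijective hbij) (h3 y y'))
  · rintro ⟨h1, h2⟩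
    have H : ∀ z w : S.X, (S.psi z w).IsFaithfullyFlatHom :=
      fun z w => h2 z w (S.psi z w) (S.psi_tmul z w)
    have hbij : ∀ y y' : S.X, Function.Bijective (S.psiGamma y y') := by
      intro y y'
      constructor
      · have hinj : Function.Injective (S.psi y y') := ffl_injective (H y y')
        intro t t' h
        apply hinj
        show S.sectToProd _ (S.psiGamma y y' t) = S.sectToProd _ (S.psiGamma y y' t')
        rw [h]
      · exact FRS.psiGamma_surjective y y' H
    refine ⟨h1, ?_, ?_⟩
    · intro x y ψ hψ
      rw [S.eq_psiGamma ψ hψ]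
      exact hbij x y
    · intro x y
      exact ffl_cancel_bij
        (ffl_congr (S.sectToProd_comp_psiGamma x y).symm (H x y)) (hbij x y)
end

section
/- Let X be an affine finite space. Then the direct limit (colimit) of the schemes Spec O_x over x ∈ X, i.e. the ringed space Spec O_X := colim_{x∈X} Spec O_x, is homeomorphic to Spec O(X), and its structure sheaf is the structure sheaf of the affine scheme Spec O(X). -/
open scoped TensorProduct

set_option maxHeartbeats 1000000
set_option synthInstance.maxHeartbeats 400000

namespace FRS

variable (S : FRS)

/-- The identification relation on `∐ₓ Spec O_x`: for `x ≤ y`, a prime of `O_y` is identified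
with its preimage in `O_x`. -/
def specRel : (Σ x : S.X, PrimeSpectrum (S.O x)) → (Σ x : S.X, PrimeSpectrum (S.O x)) → Prop :=
  fun a b => ∃ h : a.1 ≤ b.1, PrimeSpectrum.comap (S.res h) b.2 = a.2

/-- `Spec O_X := colim_{x ∈ X} Spec O_x`, as a topological space: the quotient of the disjoint
union of the `Spec O_x` by the identifications along the (flat monomorphism) transition maps. -/
def SpecColim : Type := Quot S.specRel

instance : TopologicalSpace S.SpecColim :=
  instTopologicalSpaceQuot

/-- The canonical comparison map `colimₓ Spec O_x → Spec O(X)`. -/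
def specToSpecGlobal : S.SpecColim → PrimeSpectrum (S.Gamma Set.univ) :=
  Quot.lift (fun a => PrimeSpectrum.comap (S.toStalk a.1) a.2) (by
    rintro a b ⟨h, hq⟩
    try dsimp only
    rw [← hq, ← PrimeSpectrum.comap_comp_apply]
    have key : (S.res h).comp (S.toStalk a.1) = S.toStalk b.1 :=
      RingHom.ext fun s => s.2 (z := ⟨a.1, trivial⟩) (w := ⟨b.1, trivial⟩) h
    rw [key])

end FRS

/-! The comparison map `∐ₓ Spec O_x → Spec O(X)` factors through `Spec (∏ₓ O_x) → Spec O(X)`,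
which is a quotient map because `O(X) → ∏ₓ O_x` is faithfully flat (surjective and generalizing
on spectra); so the map out of the colimit is a homeomorphism as soon as it is injective.
Two primes of `O_x` and `O_y` over the same prime of `O(X)` come from one prime of
`O_x ⊗_{O(X)} O_y = O(U_x ∩ U_y)`, hence, by faithful flatness of `O(U_x ∩ U_y) → ∏_z O_z`,
from one prime of a single `O_z` with `x, y ≤ z`: they are identified in the colimit.
On stalks, `O_x ⊗_{O(X)} O_x = O(U_x) = O_x` says that `O(X) → O_x` is a flat epimorphism;
localized at a prime it becomes a local flat, hence faithfully flat, epimorphism, which is an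
isomorphism. -/

lemma Algebra.IsEpi.bijective_algebraMap {A B : Type*} [CommRing A] [CommRing B] [Algebra A B]
    [Algebra.IsEpi A B] [Module.FaithfullyFlat A B] :
    Function.Bijective (algebraMap A B) := by
  -- after base change to `B`, `algebraMap A B` becomes `b ↦ b ⊗ 1`, inverse to multiplication
  have hcomp : ((TensorProduct.lid' A B B).toLinearMap.restrictScalars A) ∘ₗ
      (Algebra.linearMap A B).lTensor B = (_root_.TensorProduct.rid A B).toLinearMap := by
    ext b
    simp
  have hbij : Function.Bijective ((Algebra.linearMap A B).lTensor B) := by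
    have := (_root_.TensorProduct.rid A B).bijective
    rw [← LinearEquiv.coe_toLinearMap, ← hcomp, LinearMap.coe_comp] at this
    exact (((TensorProduct.lid' A B B).restrictScalars A).comp_bijective _).mp this
  exact (Module.FaithfullyFlat.lTensor_bijective_iff_bijective A B _).mp hbij

lemma Algebra.IsEpi.of_isLocalization {A B A' B' : Type*} [CommRing A] [CommRing B] [CommRing A']
    [CommRing B'] [Algebra A B] [Algebra A A'] [Algebra A' B'] [Algebra A B'] [Algebra B B']
    [IsScalarTower A A' B'] [IsScalarTower A B B'] (M : Submonoid B) [IsLocalization M B']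
    [Algebra.IsEpi A B] : Algebra.IsEpi A' B' := by
  rw [Algebra.isEpi_iff_forall_one_tmul_eq]
  let F : B ⊗[A] B →ₗ[A] B' ⊗[A'] B' := _root_.TensorProduct.lift
    (((_root_.TensorProduct.mk A' B' B').restrictScalars₁₂ A A).compl₁₂
      (IsScalarTower.toAlgHom A B B').toLinearMap (IsScalarTower.toAlgHom A B B').toLinearMap)
  have hB : ∀ b : B, (1 : B') ⊗ₜ[A'] algebraMap B B' b = algebraMap B B' b ⊗ₜ 1 := by
    intro b
    simpa [F] using congrArg F (Algebra.tmul_comm A (1 : B) b)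
  have hext : (Algebra.TensorProduct.includeRight : B' →ₐ[A'] B' ⊗[A'] B').toRingHom =
      (Algebra.TensorProduct.includeLeftRingHom : B' →+* B' ⊗[A'] B') :=
    IsLocalization.ringHom_ext M (RingHom.ext hB)
  exact fun b' => RingHom.congr_fun hext b'

lemma Algebra.IsEpi.bijective_localRingHom {A B : Type*} [CommRing A] [CommRing B] [Algebra A B]
    [Algebra.IsEpi A B] [Module.Flat A B] (P : Ideal B) [P.IsPrime] :
    Function.Bijective
      (Localization.localRingHom (P.comap (algebraMap A B)) P (algebraMap A B) rfl) := by
  let := Localization.AtPrime.algebraOfLiesOver (P.under A) P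
  have : IsLocalHom (algebraMap (Localization.AtPrime (P.under A)) (Localization.AtPrime P)) :=
    Localization.isLocalHom_localRingHom _ _ _ _
  have : Module.FaithfullyFlat (Localization.AtPrime (P.under A)) (Localization.AtPrime P) :=
    .of_flat_of_isLocalHom
  have : Algebra.IsEpi (Localization.AtPrime (P.under A)) (Localization.AtPrime P) :=
    .of_isLocalization (A := A) (B := B) P.primeCompl
  exact Algebra.IsEpi.bijective_algebraMap

lemma Ideal.comap_comap_algebraMap_residueField {S C : Type*} [CommRing S] [CommRing C]
    (p : Ideal S) [p.IsPrime] (f : p.ResidueField →+* C) (m : Ideal C) [m.IsPrime] :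
    (m.comap f).comap (algebraMap S p.ResidueField) = p := by
  rw [Ideal.eq_bot_of_prime (m.comap f), ← RingHom.ker_eq_comap_bot,
    Ideal.ker_algebraMap_residueField]

lemma PrimeSpectrum.exists_tensorProductTo_eq {R S T : Type*} [CommRing R] [CommRing S]
    [CommRing T] [Algebra R S] [Algebra R T] (p : PrimeSpectrum S) (p' : PrimeSpectrum T)
    (h : comap (algebraMap R S) p = comap (algebraMap R T) p') :
    ∃ P : PrimeSpectrum (S ⊗[R] T), tensorProductTo R S T P = (p, p') := by
  -- pull back any prime of the nonzero ring `κ(p) ⊗[κ(q)] κ(p')`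
  set q := comap (algebraMap R S) p
  let K := q.asIdeal.ResidueField
  let L := p.asIdeal.ResidueField
  let L' := p'.asIdeal.ResidueField
  let := (Ideal.ResidueField.map q.asIdeal p.asIdeal (algebraMap R S) rfl).toAlgebra
  let := (Ideal.ResidueField.map q.asIdeal p'.asIdeal (algebraMap R T)
    (congrArg asIdeal h)).toAlgebra
  have : IsScalarTower R K L := .of_algebraMap_eq fun r =>
    (Ideal.ResidueField.map_algebraMap _ _ _ _ r).symm
  have : IsScalarTower R K L' := .of_algebraMap_eq fun r =>
    (Ideal.ResidueField.map_algebraMap _ _ _ _ r).symm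
  obtain ⟨m, hm⟩ := Ideal.exists_maximal (L ⊗[K] L')
  have := hm.isPrime
  let Φ : S ⊗[R] T →+* L ⊗[K] L' := Algebra.TensorProduct.productMap
    (((Algebra.TensorProduct.includeLeft : L →ₐ[K] L ⊗[K] L').restrictScalars R).comp
      (IsScalarTower.toAlgHom R S L))
    (((Algebra.TensorProduct.includeRight : L' →ₐ[K] L ⊗[K] L').restrictScalars R).comp
      (IsScalarTower.toAlgHom R T L'))
  refine ⟨⟨m.comap Φ, inferInstance⟩, Prod.ext (PrimeSpectrum.ext ?_) (PrimeSpectrum.ext ?_)⟩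
  · show (m.comap Φ).comap (algebraMap S (S ⊗[R] T)) = p.asIdeal
    have hΦ : Φ.comp (algebraMap S (S ⊗[R] T)) =
        Algebra.TensorProduct.includeLeftRingHom.comp (algebraMap S L) := by
      ext s; simp [Φ]
    rw [Ideal.comap_comap, hΦ, ← Ideal.comap_comap, Ideal.comap_comap_algebraMap_residueField]
  · show (m.comap Φ).comap Algebra.TensorProduct.includeRight.toRingHom = p'.asIdeal
    have hΦ : Φ.comp Algebra.TensorProduct.includeRight.toRingHom =
        (Algebra.TensorProduct.includeRight : L' →ₐ[K] L ⊗[K] L').toRingHom.comp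
          (algebraMap T L') := by
      ext t; simp [Φ]
    rw [Ideal.comap_comap, hΦ, ← Ideal.comap_comap, Ideal.comap_comap_algebraMap_residueField]

lemma PrimeSpectrum.isQuotientMap_comap_of_faithfullyFlat {A B : Type*} [CommRing A]
    [CommRing B] [Algebra A B] [Module.FaithfullyFlat A B] :
    Topology.IsQuotientMap (comap (algebraMap A B)) :=
  isQuotientMap_of_generalizingMap comap_surjective_of_faithfullyFlat
    (Algebra.HasGoingDown.iff_generalizingMap_primeSpectrumComap.mp inferInstance)

namespace FRS

variable (S : FRS)

noncomputable def stalkSectAlg (x : S.X) {U : Set S.X} (hU : U ⊆ Set.Ici x) :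
    S.O x →ₐ[S.Gamma Set.univ] S.Gamma U :=
  { S.stalkSect hU with
    commutes' := fun s => Subtype.ext (funext fun z =>
      s.2 (z := ⟨x, trivial⟩) (w := ⟨z.1, trivial⟩) (hU z.2)) }

noncomputable def tensorToSect (x y : S.X) :
    S.O x ⊗[S.Gamma Set.univ] S.O y →ₐ[S.Gamma Set.univ] S.Gamma (Set.Ici x ∩ Set.Ici y) :=
  Algebra.TensorProduct.productMap (S.stalkSectAlg x Set.inter_subset_left)
    (S.stalkSectAlg y Set.inter_subset_right)

lemma tensorToSect_bijective (hS : S.IsAffine) (x y : S.X) :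
    Function.Bijective (S.tensorToSect x y) :=
  hS.2.1 x y (S.tensorToSect x y).toRingHom fun _ _ _ => rfl

lemma isEpi_toStalk (hS : S.IsAffine) (x : S.X) :
    Algebra.IsEpi (S.Gamma Set.univ) (S.O x) := by
  refine (Algebra.isEpi_iff_forall_one_tmul_eq _ _).mpr fun a =>
    (S.tensorToSect_bijective hS x x).injective ?_
  simp [tensorToSect]

lemma flat_toStalk (hS : S.IsAffine) (x : S.X) : Module.Flat (S.Gamma Set.univ) (S.O x) := by
  have : Module.FaithfullyFlat (S.Gamma Set.univ) (∀ y, S.O y) := hS.1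
  classical
  exact .of_retract (LinearMap.single _ _ x) (LinearMap.proj x) (by ext; simp)

noncomputable def tensorToProd (x y : S.X) :
    S.O x ⊗[S.Gamma Set.univ] S.O y →+* ∀ z : ↥(Set.Ici x ∩ Set.Ici y), S.O z.1 :=
  (S.sectToProd _).comp (S.tensorToSect x y).toRingHom

lemma tensorToProd_tmul {x y : S.X} (a : S.O x) (b : S.O y) (z : ↥(Set.Ici x ∩ Set.Ici y)) :
    S.tensorToProd x y (a ⊗ₜ b) z = S.res z.2.1 a * S.res z.2.2 b :=
  rfl

lemma comap_tensorToProd_surjective (hS : S.IsAffine) (x y : S.X) :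
    Function.Surjective (PrimeSpectrum.comap (S.tensorToProd x y)) := by
  let := (S.sectToProd (Set.Ici x ∩ Set.Ici y)).toAlgebra
  have : Module.FaithfullyFlat _ _ := hS.2.2 x y
  let e := RingEquiv.ofBijective _ (S.tensorToSect_bijective hS x y)
  exact (PrimeSpectrum.comapEquiv e).symm.surjective.comp
    PrimeSpectrum.comap_surjective_of_faithfullyFlat

lemma exists_le_comap_res_eq (hS : S.IsAffine) {x y : S.X} (p : PrimeSpectrum (S.O x))
    (p' : PrimeSpectrum (S.O y))
    (h : PrimeSpectrum.comap (S.toStalk x) p = PrimeSpectrum.comap (S.toStalk y) p') :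
    ∃ (z : S.X) (hxz : x ≤ z) (hyz : y ≤ z) (r : PrimeSpectrum (S.O z)),
      PrimeSpectrum.comap (S.res hxz) r = p ∧ PrimeSpectrum.comap (S.res hyz) r = p' := by
  obtain ⟨P, hP⟩ := PrimeSpectrum.exists_tensorProductTo_eq p p' h
  obtain ⟨Q, rfl⟩ := S.comap_tensorToProd_surjective hS x y P
  obtain ⟨⟨z, r⟩, rfl⟩ := (PrimeSpectrum.sigmaToPi_bijective _).surjective Q
  refine ⟨z, z.2.1, z.2.2, r, ?_, ?_⟩
  · refine Eq.trans ?_ (congrArg Prod.fst hP)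
    show _ = PrimeSpectrum.comap (((Pi.evalRingHom _ z).comp (S.tensorToProd x y)).comp
      (algebraMap _ _)) r
    congr 1
    ext a
    simp [tensorToProd_tmul]
  · refine Eq.trans ?_ (congrArg Prod.snd hP)
    show _ = PrimeSpectrum.comap (((Pi.evalRingHom _ z).comp (S.tensorToProd x y)).comp
      Algebra.TensorProduct.includeRight.toRingHom) r
    congr 1
    ext a
    simp [tensorToProd_tmul]

lemma specToSpecGlobal_injective (hS : S.IsAffine) : Function.Injective S.specToSpecGlobal := by
  rintro ⟨x, p⟩ ⟨y, p'⟩ h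
  obtain ⟨z, hxz, hyz, r, hr, hr'⟩ := S.exists_le_comap_res_eq hS p p' h
  exact (Quot.sound (⟨hxz, hr⟩ : S.specRel ⟨x, p⟩ ⟨z, r⟩)).trans
    (Quot.sound (⟨hyz, hr'⟩ : S.specRel ⟨y, p'⟩ ⟨z, r⟩)).symm

lemma isQuotientMap_comap_toProd (hS : S.IsAffine) :
    Topology.IsQuotientMap (PrimeSpectrum.comap S.toProd) := by
  have : Module.FaithfullyFlat (S.Gamma Set.univ) (∀ x, S.O x) := hS.1
  exact PrimeSpectrum.isQuotientMap_comap_of_faithfullyFlat (B := ∀ x, S.O x)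

lemma specToSpecGlobal_comp_mk :
    S.specToSpecGlobal ∘ Quot.mk S.specRel =
      PrimeSpectrum.comap S.toProd ∘ PrimeSpectrum.sigmaToPi S.O :=
  rfl

lemma isHomeomorph_specToSpecGlobal (hS : S.IsAffine) : IsHomeomorph S.specToSpecGlobal := by
  refine isHomeomorph_iff_isQuotientMap_injective.mpr ⟨?_, S.specToSpecGlobal_injective hS⟩
  have hcomp : Topology.IsQuotientMap (S.specToSpecGlobal ∘ Quot.mk S.specRel) := by
    rw [specToSpecGlobal_comp_mk]
    exact (S.isQuotientMap_comap_toProd hS).comp (PrimeSpectrum.sigmaToPiHomeo S.O).isQuotientMap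
  have hcont : Continuous S.specToSpecGlobal :=
    continuous_quot_lift _ (continuous_sigma fun x => PrimeSpectrum.continuous_comap (S.toStalk x))
  exact .of_comp continuous_quot_mk hcont hcomp

/-- For an affine finite space `X`, the ringed space
`Spec O_X = colim_{x ∈ X} Spec O_x` is the affine scheme `Spec O(X)`: the canonical comparison
map is a homeomorphism, and on structure sheaves it induces isomorphisms on all stalks, i.e.
for every prime `p` of `O_x` the natural map `O(X)_{p ∩ O(X)} → (O_x)_p` is an isomorphism. -/
theorem specColim_eq_spec (hS : S.IsAffine) :
    IsHomeomorph S.specToSpecGlobal ∧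
    (∀ (x : S.X) (p : PrimeSpectrum (S.O x)),
      Function.Bijective
        (Localization.localRingHom (Ideal.comap (S.toStalk x) p.asIdeal) p.asIdeal
          (S.toStalk x) rfl)) := by
  refine ⟨S.isHomeomorph_specToSpecGlobal hS, fun x p => ?_⟩
  have := S.isEpi_toStalk hS x
  have := S.flat_toStalk hS x
  exact Algebra.IsEpi.bijective_localRingHom p.asIdeal

end FRS
end
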